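/- arXiv:1505.08083 — 5 statements merged into one kernel-verified Lean document; each statement's English description precedes it below -/
import Mathlib

section
/- Let (A,φ) be a noncommutative probability space and let U, V ∈ A be unitaries which are *-free. If V is a Haar unitary, then UV and VU are Haar unitaries: φ((UV)^k) = 0 = φ(((UV)*)^k) and φ((VU)^k) = 0 = φ(((VU)*)^k) for all k ≥ 1. (This is the free case of the absorption property of the Haar state on the unitary dual group U⟨1⟩.) -/
noncomputable section

/-- A state on a unital `⋆`-algebra over `ℂ`. -/
def IsState {A : Type} [Ring A] [Algebra ℂ A] [StarRing A]
    (φ : A →ₗ[ℂ] ℂ) : Prop :=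
  φ 1 = 1 ∧ ∀ a : A, 0 ≤ (φ (star a * a)).re ∧ (φ (star a * a)).im = 0

/-- Two subsets `S`, `T` of a noncommutative probability space are free with respect
to `φ`: every nonempty alternating product of centered elements of `S` and `T`
is centered. -/
def IsFreePair {A : Type} [Ring A] [Algebra ℂ A] [StarRing A]
    (φ : A →ₗ[ℂ] ℂ) (S T : Set A) : Prop :=
  ∀ l : List (A × Bool), l ≠ [] →
    l.Chain' (fun p q => p.2 ≠ q.2) →
    (∀ p ∈ l, (if p.2 then p.1 ∈ S else p.1 ∈ T) ∧ φ p.1 = 0) →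
    φ (l.map Prod.fst).prod = 0

/-- `U` is a Haar unitary for the state `φ`. -/
def IsHaarUnitary {A : Type} [Ring A] [Algebra ℂ A] [StarRing A]
    (φ : A →ₗ[ℂ] ℂ) (V : A) : Prop :=
  V ∈ unitary A ∧ ∀ k : ℕ, 1 ≤ k → φ (V ^ k) = 0 ∧ φ ((star V) ^ k) = 0

/-! Write `U = U° + φ(U) 1` with `U°` centered. Left multiplication by `VU` sends an alternating
word of centered letters that begins with a power `Vⁿ` to `V U° Vⁿ ⋯ + φ(U) Vⁿ⁺¹ ⋯`, a combination
of words of the same kind. So `(VU)ᵏ` (`k ≥ 1`) and `(VU)ᵏ V = V (UV)ᵏ` lie in the span of these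
words, on which `φ` vanishes by freeness; and `φ(U x) = φ(U° x) + φ(U) φ(x) = 0` for `x` in that
span, which gives `φ((UV)ᵏ⁺¹) = 0`. The adjoint moments are the same statements for `U*, V*`. -/

section FreeWords

variable {A : Type} [Ring A] [Algebra ℂ A] {φ : A →ₗ[ℂ] ℂ} {S T : Set A}

def IsCenteredLetter (φ : A →ₗ[ℂ] ℂ) (S T : Set A) (p : A × Bool) : Prop :=
  (if p.2 then p.1 ∈ S else p.1 ∈ T) ∧ φ p.1 = 0

def IsCenteredWord (φ : A →ₗ[ℂ] ℂ) (S T : Set A) (l : List (A × Bool)) : Prop :=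
  l.IsChain (fun p q => p.2 ≠ q.2) ∧ ∀ p ∈ l, IsCenteredLetter φ S T p

theorem isCenteredWord_nil : IsCenteredWord φ S T [] :=
  ⟨List.isChain_nil, by simp⟩

theorem IsCenteredWord.cons {l : List (A × Bool)} {q : A × Bool} (hl : IsCenteredWord φ S T l)
    (hq : IsCenteredLetter φ S T q) (hne : ∀ p ∈ l.head?, q.2 ≠ p.2) :
    IsCenteredWord φ S T (q :: l) :=
  ⟨List.isChain_cons.mpr ⟨hne, hl.1⟩, List.forall_mem_cons.mpr ⟨hq, hl.2⟩⟩

theorem IsCenteredWord.of_cons {l : List (A × Bool)} {p : A × Bool}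
    (hl : IsCenteredWord φ S T (p :: l)) : IsCenteredWord φ S T l :=
  ⟨(List.isChain_cons.mp hl.1).2, fun q hq => hl.2 q (List.mem_cons_of_mem p hq)⟩

theorem IsCenteredWord.cons_of_cons {l : List (A × Bool)} {p q : A × Bool}
    (hl : IsCenteredWord φ S T (p :: l)) (hq : IsCenteredLetter φ S T q) (hqp : q.2 = p.2) :
    IsCenteredWord φ S T (q :: l) :=
  hl.of_cons.cons hq (hqp ▸ (List.isChain_cons.mp hl.1).1)

theorem IsFreePair.map_prod_eq_zero [StarRing A] (hfree : IsFreePair φ S T)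
    {l : List (A × Bool)} (hne : l ≠ []) (hl : IsCenteredWord φ S T l) :
    φ (l.map Prod.fst).prod = 0 :=
  hfree l hne hl.1 hl.2

end FreeWords

theorem mul_mul_eq_mul_sub_smul_one_mul_add {R : Type*} [Ring R] [Algebra ℂ R] (a u b : R)
    (c : ℂ) : a * u * b = a * (u - c • 1) * b + c • (a * b) := by
  simp only [mul_sub, sub_mul, mul_smul_comm, smul_mul_assoc, mul_one, sub_add_cancel]

section Absorption

variable {A : Type} [Ring A] [Algebra ℂ A] {φ : A →ₗ[ℂ] ℂ} {S T : Set A} {U V : A}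

def wordsHeadedByPow (φ : A →ₗ[ℂ] ℂ) (S T : Set A) (V : A) : Set A :=
  {x | ∃ (n : ℕ) (l : List (A × Bool)),
    IsCenteredWord φ S T ((V ^ n, false) :: l) ∧ x = V ^ n * (l.map Prod.fst).prod}

theorem map_eq_zero_of_mem_span_wordsHeadedByPow [StarRing A] (hfree : IsFreePair φ S T) {x : A}
    (hx : x ∈ Submodule.span ℂ (wordsHeadedByPow φ S T V)) : φ x = 0 := by
  refine (Submodule.span_le (p := LinearMap.ker φ)).mpr ?_ hx
  rintro _ ⟨n, l, hl, rfl⟩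
  simpa using hfree.map_prod_eq_zero (List.cons_ne_nil _ _) hl

theorem isCenteredLetter_sub_smul_one (hφ : φ 1 = 1) (hU : U - φ U • 1 ∈ S) :
    IsCenteredLetter φ S T (U - φ U • 1, true) :=
  ⟨hU, by simp [hφ]⟩

theorem mul_mul_mem_span_wordsHeadedByPow (hφ : φ 1 = 1) (hU : U - φ U • 1 ∈ S)
    (hV : ∀ n : ℕ, 1 ≤ n → IsCenteredLetter φ S T (V ^ n, false)) {x : A}
    (hx : x ∈ wordsHeadedByPow φ S T V) :
    V * U * x ∈ Submodule.span ℂ (wordsHeadedByPow φ S T V) := by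
  obtain ⟨n, l, hl, rfl⟩ := hx
  rw [mul_mul_eq_mul_sub_smul_one_mul_add _ _ _ (φ U)]
  refine add_mem (Submodule.subset_span ⟨1, (U - φ U • 1, true) :: (V ^ n, false) :: l, ?_, ?_⟩)
    (Submodule.smul_mem _ _ (Submodule.subset_span ⟨n + 1, l, ?_, ?_⟩))
  · exact (hl.cons (isCenteredLetter_sub_smul_one hφ hU) (by simp)).cons (hV 1 le_rfl) (by simp)
  · simp [mul_assoc]
  · exact hl.cons_of_cons (hV (n + 1) (Nat.le_add_left 1 n)) rfl
  · rw [pow_succ', mul_assoc]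

theorem mul_mem_span_wordsHeadedByPow (hφ : φ 1 = 1) (hU : U - φ U • 1 ∈ S)
    (hV : ∀ n : ℕ, 1 ≤ n → IsCenteredLetter φ S T (V ^ n, false)) :
    V * U ∈ Submodule.span ℂ (wordsHeadedByPow φ S T V) := by
  have hV₁ : IsCenteredWord φ S T [(V ^ 1, false)] :=
    isCenteredWord_nil.cons (hV 1 le_rfl) (by simp)
  rw [← mul_one (V * U), mul_mul_eq_mul_sub_smul_one_mul_add _ _ _ (φ U)]
  refine add_mem (Submodule.subset_span ⟨1, [(U - φ U • 1, true)], ?_, by simp⟩)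
    (Submodule.smul_mem _ _ (Submodule.subset_span ⟨1, [], hV₁, by simp⟩))
  exact (isCenteredWord_nil.cons (isCenteredLetter_sub_smul_one hφ hU) (by simp)).cons
    (hV 1 le_rfl) (by simp)

theorem pow_mul_mem_span_wordsHeadedByPow (hφ : φ 1 = 1) (hU : U - φ U • 1 ∈ S)
    (hV : ∀ n : ℕ, 1 ≤ n → IsCenteredLetter φ S T (V ^ n, false)) (k : ℕ) {x : A}
    (hx : x ∈ Submodule.span ℂ (wordsHeadedByPow φ S T V)) :
    (V * U) ^ k * x ∈ Submodule.span ℂ (wordsHeadedByPow φ S T V) := by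
  have hVU : Submodule.span ℂ (wordsHeadedByPow φ S T V) ≤
      (Submodule.span ℂ (wordsHeadedByPow φ S T V)).comap (LinearMap.mulLeft ℂ (V * U)) :=
    Submodule.span_le.mpr fun y hy => mul_mul_mem_span_wordsHeadedByPow hφ hU hV hy
  induction k with
  | zero => simpa using hx
  | succ k ih =>
    rw [pow_succ', mul_assoc]
    exact hVU ih

theorem map_mul_eq_zero_of_mem_span_wordsHeadedByPow [StarRing A] (hfree : IsFreePair φ S T)
    (hφ : φ 1 = 1) (hU : U - φ U • 1 ∈ S) {x : A}
    (hx : x ∈ Submodule.span ℂ (wordsHeadedByPow φ S T V)) : φ (U * x) = 0 := by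
  have hU₀x : Submodule.span ℂ (wordsHeadedByPow φ S T V) ≤
      (LinearMap.ker φ).comap (LinearMap.mulLeft ℂ (U - φ U • 1)) := by
    refine Submodule.span_le.mpr ?_
    rintro _ ⟨n, l, hl, rfl⟩
    simpa using hfree.map_prod_eq_zero (List.cons_ne_nil _ _)
      (hl.cons (isCenteredLetter_sub_smul_one hφ hU) (by simp))
  have split : U * x = (U - φ U • 1) * x + φ U • x := by
    simpa using mul_mul_eq_mul_sub_smul_one_mul_add 1 U x (φ U)
  rw [split, map_add, map_smul, map_eq_zero_of_mem_span_wordsHeadedByPow hfree hx, smul_zero,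
    add_zero]
  exact hU₀x hx

theorem IsFreePair.map_mul_pow_eq_zero [StarRing A] (hfree : IsFreePair φ S T)
    (hφ : φ 1 = 1) (hU : U - φ U • 1 ∈ S)
    (hV : ∀ n : ℕ, 1 ≤ n → IsCenteredLetter φ S T (V ^ n, false))
    {k : ℕ} (hk : 1 ≤ k) : φ ((U * V) ^ k) = 0 ∧ φ ((V * U) ^ k) = 0 := by
  obtain ⟨k, rfl⟩ := Nat.exists_eq_add_of_le' hk
  have hV₁ : V ∈ wordsHeadedByPow φ S T V :=
    ⟨1, [], isCenteredWord_nil.cons (hV 1 le_rfl) (by simp), by simp⟩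
  constructor
  · have hUV : (U * V) ^ (k + 1) = U * ((V * U) ^ k * V) := by
      rw [pow_succ', mul_assoc, ← (SemiconjBy.pow_right (mul_assoc V U V).symm k).eq]
    rw [hUV]
    exact map_mul_eq_zero_of_mem_span_wordsHeadedByPow hfree hφ hU
      (pow_mul_mem_span_wordsHeadedByPow hφ hU hV k (Submodule.subset_span hV₁))
  · rw [pow_succ]
    exact map_eq_zero_of_mem_span_wordsHeadedByPow hfree
      (pow_mul_mem_span_wordsHeadedByPow hφ hU hV k (mul_mem_span_wordsHeadedByPow hφ hU hV))

end Absorption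

/-- If `U`, `V` are `*`-free unitaries in a noncommutative probability
space `(A, φ)` and `V` is a Haar unitary, then `UV` and `VU` are Haar unitaries. -/
theorem haar_unitary_absorbing
    (A : Type) [Ring A] [Algebra ℂ A] [StarRing A] [StarModule ℂ A]
    (φ : A →ₗ[ℂ] ℂ) (hφ : IsState φ)
    (U V : A) (hU : U ∈ unitary A) (hV : V ∈ unitary A)
    (hfree : IsFreePair φ
      ((StarAlgebra.adjoin ℂ {U} : StarSubalgebra ℂ A) : Set A)
      ((StarAlgebra.adjoin ℂ {V} : StarSubalgebra ℂ A) : Set A))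
    (hHaar : ∀ k : ℕ, 1 ≤ k → φ (V ^ k) = 0 ∧ φ ((star V) ^ k) = 0) :
    IsHaarUnitary φ (U * V) ∧ IsHaarUnitary φ (V * U) := by
  have hU' : U ∈ StarAlgebra.adjoin ℂ {U} := StarAlgebra.self_mem_adjoin_singleton ℂ U
  have hV' : V ∈ StarAlgebra.adjoin ℂ {V} := StarAlgebra.self_mem_adjoin_singleton ℂ V
  have centered {W : A} (hW : W ∈ StarAlgebra.adjoin ℂ {U}) :
      W - φ W • 1 ∈ StarAlgebra.adjoin ℂ {U} :=
    sub_mem hW (Subalgebra.smul_mem _ (one_mem _) _)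
  have moments (k : ℕ) (hk : 1 ≤ k) :=
    hfree.map_mul_pow_eq_zero hφ.1 (centered hU')
      (fun n hn => ⟨pow_mem hV' n, (hHaar n hn).1⟩) hk
  have star_moments (k : ℕ) (hk : 1 ≤ k) :=
    hfree.map_mul_pow_eq_zero hφ.1 (centered (star_mem hU'))
      (fun n hn => ⟨pow_mem (star_mem hV') n, (hHaar n hn).2⟩) hk
  refine ⟨⟨mul_mem hU hV, fun k hk => ⟨(moments k hk).1, ?_⟩⟩,
    ⟨mul_mem hV hU, fun k hk => ⟨(moments k hk).2, ?_⟩⟩⟩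
  · rw [star_mul]; exact (star_moments k hk).2
  · rw [star_mul]; exact (star_moments k hk).1
end
end

section
/- Let n ≥ 2. There is no state h on the Brown algebra U_n^nc such that h ⋆_F φ = h for every state φ on U_n^nc. In particular, there exists no free Haar state on U⟨n⟩, i.e. no state h with φ ⋆_F h = h = h ⋆_F φ for all states φ. -/
noncomputable section

/-- A tracial state. -/
def IsTracialState {A : Type} [Ring A] [Algebra ℂ A] [StarRing A]
    (φ : A →ₗ[ℂ] ℂ) : Prop :=
  IsState φ ∧ ∀ a b : A, φ (a * b) = φ (b * a)

/-- The Brown algebra `U_n^nc`: a unital `⋆`-algebra generated by `n²` elements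
`u i j` subject to the unitarity relations, together with its universal property. -/
structure BrownAlg (n : ℕ) where
  carrier : Type
  [ring : Ring carrier]
  [algebra : Algebra ℂ carrier]
  [starRing : StarRing carrier]
  [starModule : StarModule ℂ carrier]
  u : Fin n → Fin n → carrier
  rel_left : ∀ i j, (∑ k, star (u k i) * u k j) = if i = j then 1 else 0
  rel_right : ∀ i j, (∑ k, u i k * star (u j k)) = if i = j then 1 else 0
  universal : ∀ (C : Type) [Ring C] [Algebra ℂ C] [StarRing C] [StarModule ℂ C]
      (v : Fin n → Fin n → C),
      (∀ i j, (∑ k, star (v k i) * v k j) = if i = j then 1 else 0) →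
      (∀ i j, (∑ k, v i k * star (v j k)) = if i = j then 1 else 0) →
      ∃! f : carrier →⋆ₐ[ℂ] C, ∀ i j, f (u i j) = v i j

attribute [instance] BrownAlg.ring BrownAlg.algebra BrownAlg.starRing BrownAlg.starModule

/-- The free product (coproduct) of two unital `⋆`-algebras over `ℂ`,
presented through its universal property. -/
structure FreeProd (A B : Type) [Ring A] [Algebra ℂ A] [StarRing A]
    [Ring B] [Algebra ℂ B] [StarRing B] where
  carrier : Type
  [ring : Ring carrier]
  [algebra : Algebra ℂ carrier]
  [starRing : StarRing carrier]
  [starModule : StarModule ℂ carrier]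
  inl : A →⋆ₐ[ℂ] carrier
  inr : B →⋆ₐ[ℂ] carrier
  universal : ∀ (D : Type) [Ring D] [Algebra ℂ D] [StarRing D] [StarModule ℂ D]
      (f : A →⋆ₐ[ℂ] D) (g : B →⋆ₐ[ℂ] D),
      ∃! h : carrier →⋆ₐ[ℂ] D, (∀ a, h (inl a) = f a) ∧ (∀ b, h (inr b) = g b)

attribute [instance] FreeProd.ring FreeProd.algebra FreeProd.starRing FreeProd.starModule

namespace FreeProd

variable {A B : Type} [Ring A] [Algebra ℂ A] [StarRing A]
    [Ring B] [Algebra ℂ B] [StarRing B]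

/-- The canonical embedding of a tagged element into the free product. -/
def embed (F : FreeProd A B) : A ⊕ B → F.carrier :=
  Sum.elim (fun a => F.inl a) (fun b => F.inr b)

/-- `Ψ` is the free product functional of `φ` and `ψ` on the free product `F`:
it is unital, restricts to `φ` and `ψ` on the two legs, and vanishes on alternating
products of centered elements. -/
def IsFreeProdFunctional (F : FreeProd A B) (φ : A →ₗ[ℂ] ℂ) (ψ : B →ₗ[ℂ] ℂ)
    (Ψ : F.carrier →ₗ[ℂ] ℂ) : Prop :=
  Ψ 1 = 1 ∧ (∀ a, Ψ (F.inl a) = φ a) ∧ (∀ b, Ψ (F.inr b) = ψ b) ∧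
  ∀ l : List (A ⊕ B), l ≠ [] →
    l.Chain' (fun x y => x.isLeft ≠ y.isLeft) →
    (∀ x ∈ l, Sum.elim (fun a => φ a = 0) (fun b => ψ b = 0) x) →
    Ψ ((l.map F.embed).prod) = 0

end FreeProd

section ProdFunctionals

variable {A : Type} [Ring A] [Algebra ℂ A] [StarRing A]

/-- `Ψ` is the tensor (tensor-independent) product functional of `φ` and `ψ`
relative to the counit `δc`. -/
def IsTensorProdFunctional (F : FreeProd A A) (δc : A →⋆ₐ[ℂ] ℂ)
    (φ ψ : A →ₗ[ℂ] ℂ) (Ψ : F.carrier →ₗ[ℂ] ℂ) : Prop :=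
  Ψ 1 = 1 ∧
  ∀ l : List (A ⊕ A), l ≠ [] →
    l.Chain' (fun x y => x.isLeft ≠ y.isLeft) →
    (∀ x ∈ l, Sum.elim (fun a => δc a = 0) (fun b => δc b = 0) x) →
    Ψ ((l.map F.embed).prod) =
      φ (l.filterMap Sum.getLeft?).prod * ψ (l.filterMap Sum.getRight?).prod

/-- `Ψ` is the boolean product functional of `φ` and `ψ` relative to the counit `δc`. -/
def IsBooleanProdFunctional (F : FreeProd A A) (δc : A →⋆ₐ[ℂ] ℂ)
    (φ ψ : A →ₗ[ℂ] ℂ) (Ψ : F.carrier →ₗ[ℂ] ℂ) : Prop :=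
  Ψ 1 = 1 ∧
  ∀ l : List (A ⊕ A), l ≠ [] →
    l.Chain' (fun x y => x.isLeft ≠ y.isLeft) →
    (∀ x ∈ l, Sum.elim (fun a => δc a = 0) (fun b => δc b = 0) x) →
    Ψ ((l.map F.embed).prod) = (l.map (Sum.elim (fun a => φ a) (fun b => ψ b))).prod

/-- `Ψ` is the monotone product functional of `φ` and `ψ` relative to the counit `δc`. -/
def IsMonotoneProdFunctional (F : FreeProd A A) (δc : A →⋆ₐ[ℂ] ℂ)
    (φ ψ : A →ₗ[ℂ] ℂ) (Ψ : F.carrier →ₗ[ℂ] ℂ) : Prop :=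
  Ψ 1 = 1 ∧
  ∀ l : List (A ⊕ A), l ≠ [] →
    l.Chain' (fun x y => x.isLeft ≠ y.isLeft) →
    (∀ x ∈ l, Sum.elim (fun a => δc a = 0) (fun b => δc b = 0) x) →
    Ψ ((l.map F.embed).prod) =
      φ (l.filterMap Sum.getLeft?).prod * ((l.filterMap Sum.getRight?).map (fun b => ψ b)).prod

/-- `Ψ` is the anti-monotone product functional of `φ` and `ψ` relative to the counit `δc`. -/
def IsAntiMonotoneProdFunctional (F : FreeProd A A) (δc : A →⋆ₐ[ℂ] ℂ)
    (φ ψ : A →ₗ[ℂ] ℂ) (Ψ : F.carrier →ₗ[ℂ] ℂ) : Prop :=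
  Ψ 1 = 1 ∧
  ∀ l : List (A ⊕ A), l ≠ [] →
    l.Chain' (fun x y => x.isLeft ≠ y.isLeft) →
    (∀ x ∈ l, Sum.elim (fun a => δc a = 0) (fun b => δc b = 0) x) →
    Ψ ((l.map F.embed).prod) =
      ((l.filterMap Sum.getLeft?).map (fun a => φ a)).prod * ψ (l.filterMap Sum.getRight?).prod

end ProdFunctionals

namespace BrownAlg

variable {n : ℕ}

/-- `Δ` is the coproduct of the unitary dual group `U⟨n⟩`. -/
def IsCoprod (U : BrownAlg n) (F : FreeProd U.carrier U.carrier)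
    (Δ : U.carrier →⋆ₐ[ℂ] F.carrier) : Prop :=
  ∀ i j, Δ (U.u i j) = ∑ k, F.inl (U.u i k) * F.inr (U.u k j)

/-- `δc` is the counit of the unitary dual group `U⟨n⟩`. -/
def IsCounit (U : BrownAlg n) (δc : U.carrier →⋆ₐ[ℂ] ℂ) : Prop :=
  ∀ i j, δc (U.u i j) = if i = j then 1 else 0

/-- `Σ` is the antipode of the unitary dual group `U⟨n⟩`. -/
def IsAntipode (U : BrownAlg n) (Sa : U.carrier →⋆ₐ[ℂ] U.carrier) : Prop :=
  ∀ i j, Sa (U.u i j) = star (U.u j i)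

/-- `χ = φ ⋆_F ψ`, the free convolution of the states `φ` and `ψ` on `U⟨n⟩`. -/
def FreeConv (U : BrownAlg n) (F : FreeProd U.carrier U.carrier)
    (Δ : U.carrier →⋆ₐ[ℂ] F.carrier) (φ ψ χ : U.carrier →ₗ[ℂ] ℂ) : Prop :=
  ∃ Ψ : F.carrier →ₗ[ℂ] ℂ, F.IsFreeProdFunctional φ ψ Ψ ∧ ∀ a, Ψ (Δ a) = χ a

/-- `χ = φ ⋆_T ψ`, the tensor convolution of the states `φ` and `ψ` on `U⟨n⟩`. -/
def TensorConv (U : BrownAlg n) (F : FreeProd U.carrier U.carrier)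
    (Δ : U.carrier →⋆ₐ[ℂ] F.carrier) (δc : U.carrier →⋆ₐ[ℂ] ℂ)
    (φ ψ χ : U.carrier →ₗ[ℂ] ℂ) : Prop :=
  ∃ Ψ : F.carrier →ₗ[ℂ] ℂ, IsTensorProdFunctional F δc φ ψ Ψ ∧ ∀ a, Ψ (Δ a) = χ a

/-- `χ = φ ⋆_B ψ`, the boolean convolution. -/
def BooleanConv (U : BrownAlg n) (F : FreeProd U.carrier U.carrier)
    (Δ : U.carrier →⋆ₐ[ℂ] F.carrier) (δc : U.carrier →⋆ₐ[ℂ] ℂ)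
    (φ ψ χ : U.carrier →ₗ[ℂ] ℂ) : Prop :=
  ∃ Ψ : F.carrier →ₗ[ℂ] ℂ, IsBooleanProdFunctional F δc φ ψ Ψ ∧ ∀ a, Ψ (Δ a) = χ a

/-- `χ = φ ⋆_M ψ`, the monotone convolution. -/
def MonotoneConv (U : BrownAlg n) (F : FreeProd U.carrier U.carrier)
    (Δ : U.carrier →⋆ₐ[ℂ] F.carrier) (δc : U.carrier →⋆ₐ[ℂ] ℂ)
    (φ ψ χ : U.carrier →ₗ[ℂ] ℂ) : Prop :=
  ∃ Ψ : F.carrier →ₗ[ℂ] ℂ, IsMonotoneProdFunctional F δc φ ψ Ψ ∧ ∀ a, Ψ (Δ a) = χ a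

/-- `χ = φ ⋆_AM ψ`, the anti-monotone convolution. -/
def AntiMonotoneConv (U : BrownAlg n) (F : FreeProd U.carrier U.carrier)
    (Δ : U.carrier →⋆ₐ[ℂ] F.carrier) (δc : U.carrier →⋆ₐ[ℂ] ℂ)
    (φ ψ χ : U.carrier →ₗ[ℂ] ℂ) : Prop :=
  ∃ Ψ : F.carrier →ₗ[ℂ] ℂ, IsAntiMonotoneProdFunctional F δc φ ψ Ψ ∧ ∀ a, Ψ (Δ a) = χ a

end BrownAlg

/-! If `h ⋆_F φ = h`, then `H k l := h (u r k * star (u r l))` satisfies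
`H p p = ∑ k l, φ (u k p * star (u l p)) * H k l`, because the free product functional sends
`inl a * inr x * inl b` to `φ x * h (a * b)`. In the Brown algebra the transpose of `u` need not be
unitary: the representation on `ℂⁿ ⊗ ℂ²` by the transposition `(q, 0) ↔ (p, 1)` has a vector state
with `φ (u k p * star (u l p)) = δ k p δ l p + δ k q δ l q`. Hence `H q q = 0` whenever `q ≠ p`, so
for every `q` when `n ≥ 2`, contradicting `∑ q, H q q = h 1 = 1`. -/

namespace Matrix

variable {ι : Type*} [Fintype ι] [DecidableEq ι] {A : Type*} [Semiring A] [StarRing A]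

theorem sum_star_mul_of_mem_unitary {V : Matrix ι ι A} (hV : V ∈ unitary (Matrix ι ι A))
    (i j : ι) : ∑ k, star (V k i) * V k j = if i = j then 1 else 0 := by
  simpa [mul_apply, one_apply] using ext_iff.mpr (Unitary.star_mul_self_of_mem hV) i j

theorem sum_mul_star_of_mem_unitary {V : Matrix ι ι A} (hV : V ∈ unitary (Matrix ι ι A))
    (i j : ι) : ∑ k, V i k * star (V j k) = if i = j then 1 else 0 := by
  simpa [mul_apply, one_apply] using ext_iff.mpr (Unitary.mul_star_self_of_mem hV) i j

theorem comp_symm_mem_unitary {κ : Type*} [Fintype κ] [DecidableEq κ]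
    {W : Matrix (ι × κ) (ι × κ) A} (hW : W ∈ unitary (Matrix (ι × κ) (ι × κ) A)) :
    (comp ι ι κ κ A).symm W ∈ unitary (Matrix ι ι (Matrix κ κ A)) := by
  have star_symm : star ((comp ι ι κ κ A).symm W) = (comp ι ι κ κ A).symm (star W) := rfl
  rw [Unitary.mem_iff, star_symm, ← compRingEquiv_symm_apply, ← compRingEquiv_symm_apply,
    ← map_mul, ← map_mul, Unitary.star_mul_self_of_mem hW, Unitary.mul_star_self_of_mem hW,
    map_one]
  exact ⟨rfl, rfl⟩

theorem _root_.Equiv.Perm.permMatrix_mem_unitary (σ : Equiv.Perm ι) :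
    σ.permMatrix A ∈ unitary (Matrix ι ι A) := by
  simp [Unitary.mem_iff, star_eq_conjTranspose, ← permMatrix_mul]

end Matrix

open scoped ComplexOrder in
theorem isState_entryLinearMap_comp {A : Type} [Ring A] [Algebra ℂ A] [StarRing A]
    {κ : Type*} [Fintype κ] [DecidableEq κ] (f : A →⋆ₐ[ℂ] Matrix κ κ ℂ) (c : κ) :
    IsState (Matrix.entryLinearMap ℂ ℂ c c ∘ₗ f.toAlgHom.toLinearMap) := by
  refine ⟨by simp, fun a => ?_⟩
  have hnonneg : 0 ≤ f (star a * a) c c := by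
    rw [map_mul, map_star]
    exact (Matrix.posSemidef_conjTranspose_mul_self (f a)).diag_nonneg
  obtain ⟨hre, him⟩ := Complex.nonneg_iff.mp hnonneg
  exact ⟨hre, him.symm⟩

namespace FreeProd.IsFreeProdFunctional

variable {A B : Type} [Ring A] [Algebra ℂ A] [StarRing A] [Ring B] [Algebra ℂ B] [StarRing B]
  {F : FreeProd A B} {φ : A →ₗ[ℂ] ℂ} {ψ : B →ₗ[ℂ] ℂ} {Ψ : F.carrier →ₗ[ℂ] ℂ}

theorem apply_inl_mul_inr_mul_inl_of_centered (hΨ : F.IsFreeProdFunctional φ ψ Ψ)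
    (hφ1 : φ 1 = 1) (a b : A) {x : B} (hx : ψ x = 0) :
    Ψ (F.inl a * F.inr x * F.inl b) = 0 := by
  set a₀ := a - φ a • 1
  set b₀ := b - φ b • 1
  have ha₀ : φ a₀ = 0 := by simp [a₀, hφ1]
  have hb₀ : φ b₀ = 0 := by simp [b₀, hφ1]
  have ha : F.inl a = F.inl a₀ + φ a • 1 := by simp [a₀]
  have hb : F.inl b = F.inl b₀ + φ b • 1 := by simp [b₀]
  have hword := hΨ.2.2.2
  have h3 : Ψ (F.inl a₀ * F.inr x * F.inl b₀) = 0 := by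
    simpa [embed, mul_assoc] using
      hword [.inl a₀, .inr x, .inl b₀] (by simp) (by simp [List.Chain']) (by simp [ha₀, hx, hb₀])
  have h2l : Ψ (F.inl a₀ * F.inr x) = 0 := by
    simpa [embed] using
      hword [.inl a₀, .inr x] (by simp) (by simp [List.Chain']) (by simp [ha₀, hx])
  have h2r : Ψ (F.inr x * F.inl b₀) = 0 := by
    simpa [embed] using
      hword [.inr x, .inl b₀] (by simp) (by simp [List.Chain']) (by simp [hx, hb₀])
  have h1 : Ψ (F.inr x) = 0 := by rw [hΨ.2.2.1, hx]
  rw [ha, hb]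
  simp only [add_mul, mul_add, smul_mul_assoc, mul_smul_comm, one_mul, mul_one, map_add,
    map_smul, h3, h2l, h2r, h1, smul_zero, add_zero]

theorem apply_inl_mul_inr_mul_inl (hΨ : F.IsFreeProdFunctional φ ψ Ψ) (hφ1 : φ 1 = 1)
    (hψ1 : ψ 1 = 1) (a : A) (x : B) (b : A) :
    Ψ (F.inl a * F.inr x * F.inl b) = ψ x * φ (a * b) := by
  have hx : F.inr x = F.inr (x - ψ x • 1) + ψ x • 1 := by simp
  rw [hx, mul_add, add_mul, map_add,
    hΨ.apply_inl_mul_inr_mul_inl_of_centered hφ1 a b (by simp [hψ1]), mul_smul_comm,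
    mul_one, smul_mul_assoc, ← map_mul, map_smul, hΨ.2.1, zero_add, smul_eq_mul]

end FreeProd.IsFreeProdFunctional

namespace BrownAlg

variable {n : ℕ} (U : BrownAlg n)

theorem exists_starAlgHom_of_mem_unitary {C : Type} [Ring C] [Algebra ℂ C] [StarRing C]
    [StarModule ℂ C] {V : Matrix (Fin n) (Fin n) C} (hV : V ∈ unitary (Matrix (Fin n) (Fin n) C)) :
    ∃ f : U.carrier →⋆ₐ[ℂ] C, ∀ i j, f (U.u i j) = V i j :=
  (U.universal C V (Matrix.sum_star_mul_of_mem_unitary hV)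
    (Matrix.sum_mul_star_of_mem_unitary hV)).exists

theorem FreeConv.apply_u_mul_star_u {U : BrownAlg n} {F : FreeProd U.carrier U.carrier}
    {Δ : U.carrier →⋆ₐ[ℂ] F.carrier} (hΔ : U.IsCoprod F Δ) {φ ψ χ : U.carrier →ₗ[ℂ] ℂ}
    (hconv : U.FreeConv F Δ φ ψ χ) (hφ1 : φ 1 = 1) (hψ1 : ψ 1 = 1) (r s i j : Fin n) :
    χ (U.u r i * star (U.u s j)) =
      ∑ k, ∑ l, ψ (U.u k i * star (U.u l j)) * φ (U.u r k * star (U.u s l)) := by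
  obtain ⟨Ψ, hΨ, hχ⟩ := hconv
  rw [← hχ, map_mul, map_star, hΔ, hΔ, star_sum, Finset.sum_mul_sum, map_sum]
  refine Finset.sum_congr rfl fun k _ => ?_
  rw [map_sum]
  refine Finset.sum_congr rfl fun l _ => ?_
  have hword : F.inl (U.u r k) * F.inr (U.u k i) * star (F.inl (U.u s l) * F.inr (U.u l j)) =
      F.inl (U.u r k) * F.inr (U.u k i * star (U.u l j)) * F.inl (star (U.u s l)) := by
    simp only [star_mul, ← map_star, map_mul, mul_assoc]
  rw [hword, hΨ.apply_inl_mul_inr_mul_inl hφ1 hψ1]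

theorem exists_isState_apply_u_mul_star_u {p q : Fin n} (hpq : p ≠ q) :
    ∃ φ : U.carrier →ₗ[ℂ] ℂ, IsState φ ∧ ∀ k l, φ (U.u k p * star (U.u l p)) =
      (if k = p then 1 else 0) * (if l = p then 1 else 0) +
        (if k = q then 1 else 0) * (if l = q then 1 else 0) := by
  set σ := Equiv.swap (q, (0 : Fin 2)) (p, 1)
  have hV : (Matrix.comp (Fin n) (Fin n) (Fin 2) (Fin 2) ℂ).symm (σ.permMatrix ℂ) ∈
      unitary (Matrix (Fin n) (Fin n) (Matrix (Fin 2) (Fin 2) ℂ)) :=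
    Matrix.comp_symm_mem_unitary σ.permMatrix_mem_unitary
  obtain ⟨f, hf⟩ := U.exists_starAlgHom_of_mem_unitary hV
  refine ⟨_, isState_entryLinearMap_comp f 0, fun k l => ?_⟩
  have hσ0 : ∀ k, σ (k, 0) = (p, 0) ↔ k = p := by
    intro k
    rw [Equiv.swap_apply_eq_iff, Equiv.swap_apply_of_ne_of_ne] <;> simp [hpq]
  have hσ1 : ∀ k, σ (k, 0) = (p, 1) ↔ k = q := by
    intro k
    rw [Equiv.swap_apply_eq_iff, Equiv.swap_apply_right]; simp
  simp only [LinearMap.comp_apply, AlgHom.toLinearMap_apply, StarAlgHom.coe_toAlgHom,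
    Matrix.entryLinearMap_apply, map_mul, map_star, hf, Matrix.mul_apply, Fin.sum_univ_two]
  simp [PEquiv.toMatrix_apply, hσ0, hσ1]

theorem apply_u_mul_star_u_eq_zero_of_forall_freeConv {F : FreeProd U.carrier U.carrier}
    {Δ : U.carrier →⋆ₐ[ℂ] F.carrier} (hΔ : U.IsCoprod F Δ) {h : U.carrier →ₗ[ℂ] ℂ}
    (h1 : h 1 = 1) (hinv : ∀ φ, IsState φ → U.FreeConv F Δ h φ h) (r : Fin n) {p q : Fin n}
    (hpq : p ≠ q) : h (U.u r q * star (U.u r q)) = 0 := by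
  obtain ⟨φ, hφ, hφu⟩ := U.exists_isState_apply_u_mul_star_u hpq
  have hpp := (hinv φ hφ).apply_u_mul_star_u hΔ h1 hφ.1 r r p p
  simpa [hφu, add_mul, Finset.sum_add_distrib] using hpp

theorem not_forall_freeConv_eq_self (hn : 2 ≤ n) {F : FreeProd U.carrier U.carrier}
    {Δ : U.carrier →⋆ₐ[ℂ] F.carrier} (hΔ : U.IsCoprod F Δ) {h : U.carrier →ₗ[ℂ] ℂ}
    (h1 : h 1 = 1) : ¬ ∀ φ, IsState φ → U.FreeConv F Δ h φ h := by
  intro hinv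
  have : Nontrivial (Fin n) := Fin.nontrivial_iff_two_le.mpr hn
  let r : Fin n := ⟨0, by omega⟩
  have hzero (q : Fin n) : h (U.u r q * star (U.u r q)) = 0 :=
    have ⟨p, hpq⟩ := exists_ne q
    U.apply_u_mul_star_u_eq_zero_of_forall_freeConv hΔ h1 hinv r hpq
  refine one_ne_zero (α := ℂ) ?_
  calc 1 = h (∑ k, U.u r k * star (U.u r k)) := by rw [U.rel_right, if_pos rfl, h1]
    _ = 0 := by simp [hzero]

end BrownAlg

/-- For `n ≥ 2` there is no state `h` on the Brown algebra with
`h ⋆_F φ = h` for every state `φ`; in particular there is no free Haar state on `U⟨n⟩`. -/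
theorem no_free_haar_state (n : ℕ) (hn : 2 ≤ n) (U : BrownAlg n)
    (F : FreeProd U.carrier U.carrier) (Δ : U.carrier →⋆ₐ[ℂ] F.carrier)
    (hΔ : U.IsCoprod F Δ) :
    (¬ ∃ h : U.carrier →ₗ[ℂ] ℂ, IsState h ∧
        ∀ φ : U.carrier →ₗ[ℂ] ℂ, IsState φ → U.FreeConv F Δ h φ h) ∧
    (¬ ∃ h : U.carrier →ₗ[ℂ] ℂ, IsState h ∧
        ∀ φ : U.carrier →ₗ[ℂ] ℂ, IsState φ →
          U.FreeConv F Δ φ h h ∧ U.FreeConv F Δ h φ h) :=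
  ⟨fun ⟨_, hh, hinv⟩ => U.not_forall_freeConv_eq_self hn hΔ hh.1 hinv,
    fun ⟨_, hh, hinv⟩ => U.not_forall_freeConv_eq_self hn hΔ hh.1 fun φ hφ => (hinv φ hφ).2⟩
end
end

section
/- Let n ≥ 2. There is no state h on the Brown algebra U_n^nc such that h ⋆_B φ = h for every tracial state φ on U_n^nc. In particular, there exists neither a boolean Haar state (a state h with φ ⋆_B h = h = h ⋆_B φ for all states φ) nor a boolean Haar trace (a tracial state h with φ ⋆_B h = h = h ⋆_B φ for all tracial states φ) on U⟨n⟩. -/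
noncomputable section

/-! Fix a row `i` and write `H_{jl} = h(u_{ij}^* u_{il})`. The coproduct sends `u_{ij}^* u_{il}` to
`∑_{p,q} u_{pj}^{*(2)} (u_{ip}^* u_{iq})^{(1)} u_{ql}^{(2)}`, and centring the three factors of each
word shows that `h ⋆_B φ = h` reads
`H_{jl} = ∑_{p,q} φ(u_{pj}^*) H_{pq} φ(u_{ql}) + φ(u_{ij}^* u_{il}) - φ(u_{ij}^*) φ(u_{il})`.
For a character `φ` the last two terms cancel, and the character of a transposition `(i k)` gives
`H_{ii} = H_{kk}`. For the normalized trace `φ` of `u_{ab} ↦ E_{ba}` and `c = 1/n` one gets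
`H_{jj} = c² H_{jj} + c - c² δ_{ij}`; the equations for `j = i` and `j = k` then force `c² = 0`. -/

open scoped ComplexOrder

namespace Matrix

variable {m R : Type*} [Fintype m] [DecidableEq m]

theorem trace_single_eq_ite [AddCommMonoid R] (a b : m) (r : R) :
    (single a b r).trace = if a = b then r else 0 := by
  split_ifs with hab
  · rw [hab, trace_single_eq_same]
  · exact trace_single_eq_of_ne a b r hab

theorem sum_star_single_mul_single [CommRing R] [StarRing R] (i j : m) :
    ∑ k, star (single i k 1 : Matrix m m R) * single j k 1 = if i = j then 1 else 0 := by
  split_ifs with hij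
  · simp [hij, star_eq_conjTranspose, sum_single_one]
  · simp [star_eq_conjTranspose, hij]

theorem sum_single_mul_star_single [CommRing R] [StarRing R] (i j : m) :
    ∑ k, (single k i 1 : Matrix m m R) * star (single k j 1) = if i = j then 1 else 0 := by
  split_ifs with hij
  · simp [hij, star_eq_conjTranspose, sum_single_one]
  · simp [star_eq_conjTranspose, hij]

theorem sum_star_mul_of_mem_unitaryGroup [CommRing R] [StarRing R] {V : Matrix m m R}
    (hV : V ∈ unitaryGroup m R) (i j : m) :
    ∑ k, star (V k i) * V k j = if i = j then 1 else 0 := by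
  rw [← one_apply, ← Unitary.star_mul_self_of_mem hV, mul_apply]
  rfl

theorem sum_mul_star_of_mem_unitaryGroup [CommRing R] [StarRing R] {V : Matrix m m R}
    (hV : V ∈ unitaryGroup m R) (i j : m) :
    ∑ k, V i k * star (V j k) = if i = j then 1 else 0 := by
  rw [← one_apply, ← Unitary.mul_star_self_of_mem hV, mul_apply]
  rfl

theorem swap_mem_unitaryGroup [CommRing R] [StarRing R] (a b : m) :
    swap R a b ∈ unitaryGroup m R :=
  Unitary.mem_iff.mpr <| by simp [star_eq_conjTranspose, swap_mul_self]

omit [Fintype m] in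
theorem swap_apply_col_left [Zero R] [One R] (a b p : m) :
    swap R a b p a = if p = b then 1 else 0 := by
  simp only [swap, PEquiv.toMatrix_apply, Equiv.toPEquiv_apply, Option.mem_some_iff,
    Equiv.swap_apply_eq_iff, Equiv.swap_apply_left]

end Matrix

section States

variable {A : Type} [Ring A] [Algebra ℂ A] [StarRing A] {m : Type*} [Fintype m] [DecidableEq m]

theorem IsState.of_nonneg {φ : A →ₗ[ℂ] ℂ} (h1 : φ 1 = 1)
    (hpos : ∀ a : A, 0 ≤ φ (star a * a)) : IsState φ :=
  ⟨h1, fun a => (Complex.nonneg_iff.mp (hpos a)).imp_right Eq.symm⟩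

theorem StarAlgHom.isTracialState_toLinearMap (π : A →⋆ₐ[ℂ] ℂ) :
    IsTracialState π.toAlgHom.toLinearMap := by
  refine ⟨IsState.of_nonneg (map_one π) fun a => ?_, fun a b => ?_⟩
  · show 0 ≤ π (star a * a)
    rw [map_mul, map_star]
    exact star_mul_self_nonneg (π a)
  · simp only [AlgHom.toLinearMap_apply, map_mul, mul_comm]

def normalizedTrace (π : A →⋆ₐ[ℂ] Matrix m m ℂ) : A →ₗ[ℂ] ℂ :=
  (Fintype.card m : ℂ)⁻¹ • (Matrix.traceLinearMap m ℂ ℂ ∘ₗ π.toAlgHom.toLinearMap)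

theorem normalizedTrace_apply (π : A →⋆ₐ[ℂ] Matrix m m ℂ) (a : A) :
    normalizedTrace π a = (Fintype.card m : ℂ)⁻¹ * (π a).trace := rfl

theorem isTracialState_normalizedTrace [Nonempty m] (π : A →⋆ₐ[ℂ] Matrix m m ℂ) :
    IsTracialState (normalizedTrace π) := by
  refine ⟨IsState.of_nonneg ?_ fun a => ?_, fun a b => ?_⟩
  · simp [normalizedTrace_apply]
  · rw [normalizedTrace_apply, map_mul, map_star]
    exact mul_nonneg (by positivity)
      (Matrix.posSemidef_conjTranspose_mul_self (π a)).trace_nonneg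
  · rw [normalizedTrace_apply, normalizedTrace_apply, map_mul, map_mul, Matrix.trace_mul_comm]

end States

theorem StarAlgHom.exists_eq_centered_add_smul_one {A : Type} [Ring A] [Algebra ℂ A]
    [StarRing A] (δc : A →⋆ₐ[ℂ] ℂ) (a : A) : ∃ a₀ : A, ∃ t : ℂ, δc a₀ = 0 ∧ a = a₀ + t • 1 :=
  ⟨a - δc a • 1, δc a, by simp, by simp⟩

namespace IsBooleanProdFunctional

variable {A : Type} [Ring A] [Algebra ℂ A] [StarRing A] {F : FreeProd A A}
  {δc : A →⋆ₐ[ℂ] ℂ} {h φ : A →ₗ[ℂ] ℂ} {Ψ : F.carrier →ₗ[ℂ] ℂ}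

theorem apply_inl_of_counit_eq_zero (hΨ : IsBooleanProdFunctional F δc h φ Ψ) {a : A}
    (ha : δc a = 0) : Ψ (F.inl a) = h a := by
  simpa [FreeProd.embed] using hΨ.2 [.inl a] (by simp) (.singleton _) (by simp [ha])

theorem apply_inr_of_counit_eq_zero (hΨ : IsBooleanProdFunctional F δc h φ Ψ) {a : A}
    (ha : δc a = 0) : Ψ (F.inr a) = φ a := by
  simpa [FreeProd.embed] using hΨ.2 [.inr a] (by simp) (.singleton _) (by simp [ha])

theorem apply_inl_mul_inr_of_counit_eq_zero (hΨ : IsBooleanProdFunctional F δc h φ Ψ)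
    {a b : A} (ha : δc a = 0) (hb : δc b = 0) : Ψ (F.inl a * F.inr b) = h a * φ b := by
  simpa [FreeProd.embed] using hΨ.2 [.inl a, .inr b] (by simp)
    (.cons_cons (by simp) (.singleton _)) (by simp [ha, hb])

theorem apply_inr_mul_inl_of_counit_eq_zero (hΨ : IsBooleanProdFunctional F δc h φ Ψ)
    {a b : A} (ha : δc a = 0) (hb : δc b = 0) : Ψ (F.inr a * F.inl b) = φ a * h b := by
  simpa [FreeProd.embed] using hΨ.2 [.inr a, .inl b] (by simp)
    (.cons_cons (by simp) (.singleton _)) (by simp [ha, hb])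

theorem apply_inr_mul_inl_mul_inr_of_counit_eq_zero (hΨ : IsBooleanProdFunctional F δc h φ Ψ)
    {a b c : A} (ha : δc a = 0) (hb : δc b = 0) (hc : δc c = 0) :
    Ψ (F.inr a * (F.inl b * F.inr c)) = φ a * h b * φ c := by
  simpa [FreeProd.embed, mul_assoc] using
    hΨ.2 [.inr a, .inl b, .inr c] (by simp)
      (.cons_cons (by simp) (.cons_cons (by simp) (.singleton _))) (by simp [ha, hb, hc])

theorem apply_inr_mul_inl_mul_inr (hΨ : IsBooleanProdFunctional F δc h φ Ψ) (hh : h 1 = 1)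
    (hφ : φ 1 = 1) (b c d : A) :
    Ψ (F.inr b * (F.inl c * F.inr d)) = φ b * h c * φ d + δc c * (φ (b * d) - φ b * φ d) := by
  obtain ⟨b, β, hb, rfl⟩ := δc.exists_eq_centered_add_smul_one b
  obtain ⟨c, γ, hc, rfl⟩ := δc.exists_eq_centered_add_smul_one c
  obtain ⟨d, η, hd, rfl⟩ := δc.exists_eq_centered_add_smul_one d
  have hbd : Ψ (F.inr b * F.inr d) = φ (b * d) := by
    rw [← map_mul]
    exact hΨ.apply_inr_of_counit_eq_zero (by rw [map_mul, hb, zero_mul])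
  simp only [map_add, map_smul, map_one, add_mul, mul_add, smul_mul_assoc, mul_smul_comm,
    one_mul, mul_one, smul_eq_mul, hΨ.1, hh, hφ, hc, hbd,
    hΨ.apply_inr_mul_inl_mul_inr_of_counit_eq_zero hb hc hd,
    hΨ.apply_inr_mul_inl_of_counit_eq_zero hb hc, hΨ.apply_inl_mul_inr_of_counit_eq_zero hc hd,
    hΨ.apply_inl_of_counit_eq_zero hc, hΨ.apply_inr_of_counit_eq_zero hb,
    hΨ.apply_inr_of_counit_eq_zero hd]
  ring

end IsBooleanProdFunctional

namespace BrownAlg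

variable {n : ℕ} (U : BrownAlg n)

def character (V : Matrix.unitaryGroup (Fin n) ℂ) : U.carrier →⋆ₐ[ℂ] ℂ :=
  (U.universal ℂ (fun i j => (V : Matrix (Fin n) (Fin n) ℂ) i j)
    (Matrix.sum_star_mul_of_mem_unitaryGroup V.2)
    (Matrix.sum_mul_star_of_mem_unitaryGroup V.2)).exists.choose

theorem character_u (V : Matrix.unitaryGroup (Fin n) ℂ) (i j : Fin n) :
    U.character V (U.u i j) = (V : Matrix (Fin n) (Fin n) ℂ) i j :=
  (U.universal ℂ _ (Matrix.sum_star_mul_of_mem_unitaryGroup V.2)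
    (Matrix.sum_mul_star_of_mem_unitaryGroup V.2)).exists.choose_spec i j

/-- `u a b ↦ E_{ba}`: the matrix `(E_{ba})_{a b}` is the flip of `ℂⁿ ⊗ ℂⁿ`, hence unitary,
whereas `(E_{ab})_{a b}` is not. -/
def fundamentalRep : U.carrier →⋆ₐ[ℂ] Matrix (Fin n) (Fin n) ℂ :=
  (U.universal _ (fun i j => Matrix.single j i 1) Matrix.sum_star_single_mul_single
    Matrix.sum_single_mul_star_single).exists.choose

theorem fundamentalRep_u (i j : Fin n) :
    U.fundamentalRep (U.u i j) = Matrix.single j i 1 :=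
  (U.universal _ _ Matrix.sum_star_single_mul_single
    Matrix.sum_single_mul_star_single).exists.choose_spec i j

variable {U} {F : FreeProd U.carrier U.carrier} {Δ : U.carrier →⋆ₐ[ℂ] F.carrier}
  {δc : U.carrier →⋆ₐ[ℂ] ℂ} {h χ : U.carrier →ₗ[ℂ] ℂ}

theorem IsCoprod.apply_star_u_mul_u (hΔ : U.IsCoprod F Δ) (i j l : Fin n) :
    Δ (star (U.u i j) * U.u i l) =
      ∑ p, ∑ q, F.inr (star (U.u p j)) * (F.inl (star (U.u i p) * U.u i q) * F.inr (U.u q l)) := by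
  simp only [map_mul, map_star, hΔ i j, hΔ i l, star_sum, star_mul, Finset.sum_mul_sum, mul_assoc]

theorem IsCounit.apply_star_u_mul_u (hδ : U.IsCounit δc) (i p q : Fin n) :
    δc (star (U.u i p) * U.u i q) = if i = p ∧ i = q then 1 else 0 := by
  rw [map_mul, map_star, hδ, hδ]
  by_cases hp : i = p <;> by_cases hq : i = q <;> simp [hp, hq]

theorem BooleanConv.apply_star_u_mul_u (hΔ : U.IsCoprod F Δ) (hδ : U.IsCounit δc)
    {φ : U.carrier →ₗ[ℂ] ℂ} (hconv : U.BooleanConv F Δ δc h φ χ) (hh : h 1 = 1)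
    (hφ : φ 1 = 1) (i j l : Fin n) :
    χ (star (U.u i j) * U.u i l) =
      ∑ p, ∑ q, φ (star (U.u p j)) * h (star (U.u i p) * U.u i q) * φ (U.u q l) +
        (φ (star (U.u i j) * U.u i l) - φ (star (U.u i j)) * φ (U.u i l)) := by
  obtain ⟨Ψ, hΨ, hΨΔ⟩ := hconv
  rw [← hΨΔ, hΔ.apply_star_u_mul_u]
  simp only [map_sum, hΨ.apply_inr_mul_inl_mul_inr hh hφ, hδ.apply_star_u_mul_u,
    Finset.sum_add_distrib, ite_mul, one_mul, zero_mul, ite_and]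
  simp

theorem BooleanConv.apply_star_u_mul_u_of_character (hΔ : U.IsCoprod F Δ)
    (hδ : U.IsCounit δc) {V : Matrix.unitaryGroup (Fin n) ℂ}
    (hconv : U.BooleanConv F Δ δc h (U.character V).toAlgHom.toLinearMap χ) (hh : h 1 = 1)
    (i j l : Fin n) :
    χ (star (U.u i j) * U.u i l) =
      ∑ p, ∑ q, star ((V : Matrix (Fin n) (Fin n) ℂ) p j) * h (star (U.u i p) * U.u i q) *
        (V : Matrix (Fin n) (Fin n) ℂ) q l := by
  rw [hconv.apply_star_u_mul_u hΔ hδ hh (map_one (U.character V))]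
  simp [character_u, map_star]

theorem BooleanConv.apply_star_u_mul_u_of_swap (hΔ : U.IsCoprod F Δ) (hδ : U.IsCounit δc)
    {a b : Fin n} (hconv : U.BooleanConv F Δ δc h
      (U.character ⟨_, Matrix.swap_mem_unitaryGroup a b⟩).toAlgHom.toLinearMap χ)
    (hh : h 1 = 1) (i : Fin n) :
    χ (star (U.u i a) * U.u i a) = h (star (U.u i b) * U.u i b) := by
  rw [hconv.apply_star_u_mul_u_of_character hΔ hδ hh]
  simp [Matrix.swap_apply_col_left]

theorem BooleanConv.apply_star_u_mul_u_of_fundamentalRep [NeZero n] (hΔ : U.IsCoprod F Δ)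
    (hδ : U.IsCounit δc) (hconv : U.BooleanConv F Δ δc h (normalizedTrace U.fundamentalRep) χ)
    (hh : h 1 = 1) (i j : Fin n) :
    χ (star (U.u i j) * U.u i j) =
      (n : ℂ)⁻¹ ^ 2 * h (star (U.u i j) * U.u i j) +
        ((n : ℂ)⁻¹ - if i = j then (n : ℂ)⁻¹ ^ 2 else 0) := by
  rw [hconv.apply_star_u_mul_u hΔ hδ hh (isTracialState_normalizedTrace _).1.1]
  simp only [normalizedTrace_apply, fundamentalRep_u, map_star, map_mul, Fintype.card_fin,
    Matrix.star_eq_conjTranspose, Matrix.conjTranspose_single, star_one,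
    Matrix.single_mul_single_same, Matrix.trace_single_eq_ite, mul_ite, mul_one,
    mul_zero, ite_mul, zero_mul, Finset.sum_ite_eq, Finset.sum_ite_eq', Finset.mem_univ,
    if_true]
  by_cases hij : i = j
  · simp only [hij, if_true]
    ring
  · simp only [hij, Ne.symm hij, if_false]
    ring

theorem not_exists_isState_forall_booleanConv_eq (hn : 2 ≤ n) (hΔ : U.IsCoprod F Δ)
    (hδ : U.IsCounit δc) :
    ¬ ∃ h : U.carrier →ₗ[ℂ] ℂ, IsState h ∧
      ∀ φ : U.carrier →ₗ[ℂ] ℂ, IsTracialState φ → U.BooleanConv F Δ δc h φ h := by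
  rintro ⟨h, hh, hinv⟩
  have : NeZero n := ⟨by omega⟩
  let i : Fin n := ⟨0, by omega⟩
  let k : Fin n := ⟨1, by omega⟩
  have hik : i ≠ k := by simp [i, k, Fin.ext_iff]
  have hswap : h (star (U.u i i) * U.u i i) = h (star (U.u i k) * U.u i k) :=
    (hinv _ (StarAlgHom.isTracialState_toLinearMap _)).apply_star_u_mul_u_of_swap hΔ hδ hh.1 i
  have htrace (j : Fin n) := (hinv _ (isTracialState_normalizedTrace U.fundamentalRep)
    ).apply_star_u_mul_u_of_fundamentalRep hΔ hδ hh.1 i j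
  have hii := htrace i
  have hkk := htrace k
  rw [if_pos rfl] at hii
  rw [if_neg hik] at hkk
  have hsq : (n : ℂ)⁻¹ ^ 2 = 0 := by
    linear_combination hii - hkk - (1 - (n : ℂ)⁻¹ ^ 2) * hswap
  simp at hsq
  omega

end BrownAlg

/-- For `n ≥ 2` there is no state `h` on the Brown algebra with
`h ⋆_B φ = h` for every tracial state `φ`; in particular there is neither a boolean
Haar state nor a boolean Haar trace on `U⟨n⟩`. -/
theorem no_boolean_haar_state (n : ℕ) (hn : 2 ≤ n) (U : BrownAlg n)
    (F : FreeProd U.carrier U.carrier) (Δ : U.carrier →⋆ₐ[ℂ] F.carrier)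
    (hΔ : U.IsCoprod F Δ) (δc : U.carrier →⋆ₐ[ℂ] ℂ) (hδ : U.IsCounit δc) :
    (¬ ∃ h : U.carrier →ₗ[ℂ] ℂ, IsState h ∧
        ∀ φ : U.carrier →ₗ[ℂ] ℂ, IsTracialState φ → U.BooleanConv F Δ δc h φ h) ∧
    (¬ ∃ h : U.carrier →ₗ[ℂ] ℂ, IsState h ∧
        ∀ φ : U.carrier →ₗ[ℂ] ℂ, IsState φ →
          U.BooleanConv F Δ δc φ h h ∧ U.BooleanConv F Δ δc h φ h) ∧
    (¬ ∃ h : U.carrier →ₗ[ℂ] ℂ, IsTracialState h ∧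
        ∀ φ : U.carrier →ₗ[ℂ] ℂ, IsTracialState φ →
          U.BooleanConv F Δ δc φ h h ∧ U.BooleanConv F Δ δc h φ h) := by
  have key := BrownAlg.not_exists_isState_forall_booleanConv_eq hn hΔ hδ
  refine ⟨key, ?_, ?_⟩
  · rintro ⟨h, hh, hhaar⟩
    exact key ⟨h, hh, fun φ hφ => (hhaar φ hφ.1).2⟩
  · rintro ⟨h, hh, hhaar⟩
    exact key ⟨h, hh.1, fun φ hφ => (hhaar φ hφ).2⟩
end
end

section
/- Let n ≥ 2. There is no state h on the Brown algebra U_n^nc such that h ⋆_M φ = h for every tracial state φ on U_n^nc. In particular, there exists neither a monotone Haar state (a state h with φ ⋆_M h = h = h ⋆_M φ for all states φ) nor a monotone Haar trace (a tracial state h with φ ⋆_M h = h = h ⋆_M φ for all tracial states φ) on U⟨n⟩. -/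
noncomputable section

/-!
For a unitary matrix `V`, `u i j ↦ V i j • σx` is a `⋆`-representation of the Brown algebra on
`M₂(ℂ)`; composed with the normalized trace it gives a tracial state `ψ_V` that vanishes on every
`u i j` and `star (u i j)`, since `tr σx = 0`. In a monotone product of `h` and `ψ`, a word
`inr b * inl a * inr b'` with `ψ b = ψ b' = 0` evaluates to `δ a * ψ (b * b')`: the left leg only
enters through the counit. Expanding `Δ (star (u k l) * u i j)` with this rule, `h ⋆_M ψ_V = h`
forces `h (star (u k l) * u i j) = ψ_V (star (u k l) * u i j) = conj (V k l) * V i j`. For `n ≥ 2`,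
`V = 1` and a transposition matrix give the values `1` and `0` for the same element. A monotone
Haar state or trace would in particular be right-invariant under all tracial states.
-/

open scoped ComplexOrder

section TracialState

variable {A B : Type} [Ring A] [Algebra ℂ A] [StarRing A] [Ring B] [Algebra ℂ B] [StarRing B]

lemma IsTracialState.comp {φ : B →ₗ[ℂ] ℂ} (hφ : IsTracialState φ) (π : A →⋆ₐ[ℂ] B) :
    IsTracialState (φ ∘ₗ π.toAlgHom.toLinearMap) := by
  refine ⟨⟨by simpa using hφ.1.1, fun a => ?_⟩, fun a b => ?_⟩
  · simpa [map_star] using hφ.1.2 (π a)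
  · simpa using hφ.2 (π a) (π b)

end TracialState

namespace Matrix

variable (ι : Type) [Fintype ι]

def normalizedTrace : Matrix ι ι ℂ →ₗ[ℂ] ℂ :=
  (Fintype.card ι : ℂ)⁻¹ • traceLinearMap ι ℂ ℂ

variable {ι}

lemma normalizedTrace_apply (M : Matrix ι ι ℂ) :
    normalizedTrace ι M = (Fintype.card ι : ℂ)⁻¹ * M.trace := rfl

variable [DecidableEq ι] [Nonempty ι]

lemma normalizedTrace_one : normalizedTrace ι 1 = 1 := by
  simp [normalizedTrace_apply]

lemma isTracialState_normalizedTrace : IsTracialState (normalizedTrace ι) := by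
  refine ⟨⟨normalizedTrace_one, fun M => ?_⟩, fun M N => ?_⟩
  · have hnonneg : 0 ≤ normalizedTrace ι (star M * M) :=
      mul_nonneg (by positivity) (posSemidef_conjTranspose_mul_self M).trace_nonneg
    exact ⟨(Complex.nonneg_iff.mp hnonneg).1, (Complex.nonneg_iff.mp hnonneg).2.symm⟩
  · rw [normalizedTrace_apply, normalizedTrace_apply, trace_mul_comm]

end Matrix

lemma Equiv.Perm.permMatrix_mem_unitaryGroup {ι R : Type} [Fintype ι] [DecidableEq ι]
    [CommRing R] [StarRing R] (σ : Equiv.Perm ι) :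
    σ.permMatrix R ∈ Matrix.unitaryGroup ι R := by
  rw [Matrix.mem_unitaryGroup_iff, Matrix.star_eq_conjTranspose, Matrix.conjTranspose_permMatrix,
    ← Matrix.permMatrix_mul, inv_mul_cancel, Matrix.permMatrix_one]

def pauliX : Matrix (Fin 2) (Fin 2) ℂ := !![0, 1; 1, 0]

lemma star_pauliX : star pauliX = pauliX := by
  ext i j
  fin_cases i <;> fin_cases j <;> simp [pauliX, Matrix.star_apply]

lemma pauliX_mul_self : pauliX * pauliX = 1 := by
  ext i j
  fin_cases i <;> fin_cases j <;> simp [pauliX, Matrix.mul_apply]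

lemma pauliX_mem_unitary : pauliX ∈ unitary (Matrix (Fin 2) (Fin 2) ℂ) := by
  rw [Unitary.mem_iff, star_pauliX, pauliX_mul_self]
  exact ⟨rfl, rfl⟩

lemma trace_pauliX : pauliX.trace = 0 := by
  simp [pauliX, Matrix.trace]

lemma exists_map_eq_zero_and_eq_add_smul_one {R A G : Type*} [CommRing R] [Ring A]
    [Algebra R A] [FunLike G A R] [AlgHomClass G R A R] (χ : G) (a : A) :
    ∃ (a₀ : A) (c : R), χ a₀ = 0 ∧ a = a₀ + c • 1 :=
  ⟨a - χ a • 1, χ a, by simp, by simp⟩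

namespace IsMonotoneProdFunctional

variable {A : Type} [Ring A] [Algebra ℂ A] [StarRing A] {F : FreeProd A A}
  {δc : A →⋆ₐ[ℂ] ℂ} {φ ψ : A →ₗ[ℂ] ℂ} {Ψ : F.carrier →ₗ[ℂ] ℂ}
  (hΨ : IsMonotoneProdFunctional F δc φ ψ Ψ)
include hΨ

lemma apply_inl_of_counit_eq_zero {a : A} (ha : δc a = 0) : Ψ (F.inl a) = φ a := by
  simpa [FreeProd.embed, List.filterMap_cons] using
    hΨ.2 [.inl a] (by simp) (show List.IsChain _ _ by simp) (by simp [ha])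

lemma apply_inr_of_counit_eq_zero (hφ : φ 1 = 1) {b : A} (hb : δc b = 0) :
    Ψ (F.inr b) = ψ b := by
  simpa [FreeProd.embed, List.filterMap_cons, hφ] using
    hΨ.2 [.inr b] (by simp) (show List.IsChain _ _ by simp) (by simp [hb])

lemma apply_inl_mul_inr_of_counit_eq_zero {a b : A} (ha : δc a = 0) (hb : δc b = 0) :
    Ψ (F.inl a * F.inr b) = φ a * ψ b := by
  simpa [FreeProd.embed, List.filterMap_cons] using
    hΨ.2 [.inl a, .inr b] (by simp) (show List.IsChain _ _ by simp) (by simp [ha, hb])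

lemma apply_inr_mul_inl_of_counit_eq_zero {b a : A} (hb : δc b = 0) (ha : δc a = 0) :
    Ψ (F.inr b * F.inl a) = φ a * ψ b := by
  simpa [FreeProd.embed, List.filterMap_cons] using
    hΨ.2 [.inr b, .inl a] (by simp) (show List.IsChain _ _ by simp) (by simp [ha, hb])

lemma apply_inr_mul_inl_mul_inr_of_counit_eq_zero {b a b' : A} (hb : δc b = 0)
    (ha : δc a = 0) (hb' : δc b' = 0) :
    Ψ (F.inr b * F.inl a * F.inr b') = φ a * (ψ b * ψ b') := by
  simpa [FreeProd.embed, List.filterMap_cons, mul_assoc] using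
    hΨ.2 [.inr b, .inl a, .inr b'] (by simp) (show List.IsChain _ _ by simp) (by simp [ha, hb, hb'])

lemma apply_inr (hφ : φ 1 = 1) (hψ : ψ 1 = 1) (b : A) : Ψ (F.inr b) = ψ b := by
  obtain ⟨b₀, β, hb₀, rfl⟩ := exists_map_eq_zero_and_eq_add_smul_one δc b
  simp [hΨ.apply_inr_of_counit_eq_zero hφ hb₀, hΨ.1, hψ]

lemma apply_inr_mul_inl_mul_inr (hφ : φ 1 = 1) (hψ : ψ 1 = 1) (b a b' : A) :
    Ψ (F.inr b * F.inl a * F.inr b') =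
      φ a * ψ b * ψ b' + δc a * (ψ (b * b') - ψ b * ψ b') := by
  obtain ⟨b₀, β, hb₀, rfl⟩ := exists_map_eq_zero_and_eq_add_smul_one δc b
  obtain ⟨a₀, α, ha₀, rfl⟩ := exists_map_eq_zero_and_eq_add_smul_one δc a
  obtain ⟨b₀', β', hb₀', rfl⟩ := exists_map_eq_zero_and_eq_add_smul_one δc b'
  simp only [map_add, map_smul, map_one, add_mul, mul_add, smul_mul_assoc, mul_smul_comm,
    one_mul, mul_one, smul_add, smul_smul, ← map_mul, smul_eq_mul]
  rw [hΨ.apply_inr_mul_inl_mul_inr_of_counit_eq_zero hb₀ ha₀ hb₀',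
    hΨ.apply_inr_mul_inl_of_counit_eq_zero hb₀ ha₀, hΨ.apply_inl_mul_inr_of_counit_eq_zero ha₀ hb₀',
    hΨ.apply_inl_of_counit_eq_zero ha₀, hΨ.apply_inr hφ hψ, hΨ.apply_inr hφ hψ,
    hΨ.apply_inr hφ hψ, hΨ.1]
  simp only [hφ, hψ, ha₀]
  ring

end IsMonotoneProdFunctional

section UnitaryRelations

variable {n : ℕ} {C : Type} [Ring C] [Algebra ℂ C] [StarRing C] [StarModule ℂ C]
  (V : Matrix.unitaryGroup (Fin n) ℂ) {s : C} (hs : s ∈ unitary C)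
include hs

lemma sum_star_smul_mul_smul_of_mem_unitary (i j : Fin n) :
    ∑ k, star (V k i • s) * (V k j • s) = if i = j then 1 else 0 := by
  have hV := congrFun (congrFun (Matrix.UnitaryGroup.star_mul_self V) i) j
  simp only [Matrix.mul_apply, Matrix.star_apply, Matrix.one_apply] at hV
  simp only [star_smul, smul_mul_smul, Unitary.star_mul_self_of_mem hs, ← Finset.sum_smul, hV]
  split_ifs <;> simp

lemma sum_smul_mul_star_smul_of_mem_unitary (i j : Fin n) :
    ∑ k, (V i k • s) * star (V j k • s) = if i = j then 1 else 0 := by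
  have hV := congrFun (congrFun V.2.2 i) j
  simp only [Matrix.mul_apply, Matrix.star_apply, Matrix.one_apply] at hV
  simp only [star_smul, smul_mul_smul, Unitary.mul_star_self_of_mem hs, ← Finset.sum_smul, hV]
  split_ifs <;> simp

end UnitaryRelations

namespace BrownAlg

variable {n : ℕ} (U : BrownAlg n)

def smulUnitaryRep {C : Type} [Ring C] [Algebra ℂ C] [StarRing C] [StarModule ℂ C]
    (V : Matrix.unitaryGroup (Fin n) ℂ) {s : C} (hs : s ∈ unitary C) : U.carrier →⋆ₐ[ℂ] C :=
  (U.universal C (fun i j => V i j • s) (sum_star_smul_mul_smul_of_mem_unitary V hs)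
    (sum_smul_mul_star_smul_of_mem_unitary V hs)).choose

lemma smulUnitaryRep_u {C : Type} [Ring C] [Algebra ℂ C] [StarRing C] [StarModule ℂ C]
    (V : Matrix.unitaryGroup (Fin n) ℂ) {s : C} (hs : s ∈ unitary C) (i j : Fin n) :
    U.smulUnitaryRep V hs (U.u i j) = V i j • s :=
  (U.universal C _ (sum_star_smul_mul_smul_of_mem_unitary V hs)
    (sum_smul_mul_star_smul_of_mem_unitary V hs)).choose_spec.1 i j

def pauliState (V : Matrix.unitaryGroup (Fin n) ℂ) : U.carrier →ₗ[ℂ] ℂ :=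
  Matrix.normalizedTrace (Fin 2) ∘ₗ (U.smulUnitaryRep V pauliX_mem_unitary).toAlgHom.toLinearMap

variable (V : Matrix.unitaryGroup (Fin n) ℂ)

lemma isTracialState_pauliState : IsTracialState (U.pauliState V) :=
  Matrix.isTracialState_normalizedTrace.comp _

lemma pauliState_u (i j : Fin n) : U.pauliState V (U.u i j) = 0 := by
  simp [pauliState, smulUnitaryRep_u, Matrix.normalizedTrace_apply, trace_pauliX]

lemma pauliState_star_u (i j : Fin n) : U.pauliState V (star (U.u i j)) = 0 := by
  simp [pauliState, map_star, smulUnitaryRep_u, Matrix.normalizedTrace_apply, star_pauliX,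
    trace_pauliX]

lemma pauliState_star_u_mul_u (k l i j : Fin n) :
    U.pauliState V (star (U.u k l) * U.u i j) = star (V k l) * V i j := by
  simp [pauliState, map_star, smulUnitaryRep_u, Matrix.normalizedTrace_apply, star_pauliX,
    pauliX_mul_self, mul_comm]

lemma apply_star_u_mul_u_of_monotoneConv {F : FreeProd U.carrier U.carrier}
    {Δ : U.carrier →⋆ₐ[ℂ] F.carrier} (hΔ : U.IsCoprod F Δ) {δc : U.carrier →⋆ₐ[ℂ] ℂ}
    (hδ : U.IsCounit δc) {h ψ : U.carrier →ₗ[ℂ] ℂ} (hconv : U.MonotoneConv F Δ δc h ψ h)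
    (h1 : h 1 = 1) (ψ1 : ψ 1 = 1) (hψu : ∀ i j, ψ (U.u i j) = 0)
    (hψu' : ∀ i j, ψ (star (U.u i j)) = 0) (k l i j : Fin n) :
    h (star (U.u k l) * U.u i j) = ψ (star (U.u k l) * U.u i j) := by
  obtain ⟨Ψ, hΨ, hΨΔ⟩ := hconv
  have hΔ' : Δ (star (U.u k l) * U.u i j) = ∑ q, ∑ p,
      F.inr (star (U.u q l)) * F.inl (star (U.u k q) * U.u i p) * F.inr (U.u p j) := by
    rw [map_mul, map_star, hΔ k l, hΔ i j, star_sum, Finset.sum_mul_sum]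
    refine Finset.sum_congr rfl fun q _ => Finset.sum_congr rfl fun p _ => ?_
    rw [star_mul, ← map_star, ← map_star, map_mul]
    simp only [mul_assoc]
  rw [← hΨΔ, hΔ']
  simp only [map_sum, hΨ.apply_inr_mul_inl_mul_inr h1 ψ1]
  simp [hψu, hψu', map_star, show ∀ i j, δc (U.u i j) = _ from hδ, ite_mul]

lemma apply_star_u_mul_u_of_monotoneConv_pauliState {F : FreeProd U.carrier U.carrier}
    {Δ : U.carrier →⋆ₐ[ℂ] F.carrier} (hΔ : U.IsCoprod F Δ)
    {δc : U.carrier →⋆ₐ[ℂ] ℂ} (hδ : U.IsCounit δc) {h : U.carrier →ₗ[ℂ] ℂ} (h1 : h 1 = 1)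
    {V : Matrix.unitaryGroup (Fin n) ℂ} (hconv : U.MonotoneConv F Δ δc h (U.pauliState V) h)
    (k l i j : Fin n) :
    h (star (U.u k l) * U.u i j) = star (V k l) * V i j := by
  rw [U.apply_star_u_mul_u_of_monotoneConv hΔ hδ hconv h1 (U.isTracialState_pauliState V).1.1
    (U.pauliState_u V) (U.pauliState_star_u V), U.pauliState_star_u_mul_u]

end BrownAlg

/-- For `n ≥ 2` there is no state `h` on the Brown algebra with
`h ⋆_M φ = h` for every tracial state `φ`; in particular there is neither a monotone
Haar state nor a monotone Haar trace on `U⟨n⟩`. -/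
theorem no_monotone_haar_state (n : ℕ) (hn : 2 ≤ n) (U : BrownAlg n)
    (F : FreeProd U.carrier U.carrier) (Δ : U.carrier →⋆ₐ[ℂ] F.carrier)
    (hΔ : U.IsCoprod F Δ) (δc : U.carrier →⋆ₐ[ℂ] ℂ) (hδ : U.IsCounit δc) :
    (¬ ∃ h : U.carrier →ₗ[ℂ] ℂ, IsState h ∧
        ∀ φ : U.carrier →ₗ[ℂ] ℂ, IsTracialState φ → U.MonotoneConv F Δ δc h φ h) ∧
    (¬ ∃ h : U.carrier →ₗ[ℂ] ℂ, IsState h ∧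
        ∀ φ : U.carrier →ₗ[ℂ] ℂ, IsState φ →
          U.MonotoneConv F Δ δc φ h h ∧ U.MonotoneConv F Δ δc h φ h) ∧
    (¬ ∃ h : U.carrier →ₗ[ℂ] ℂ, IsTracialState h ∧
        ∀ φ : U.carrier →ₗ[ℂ] ℂ, IsTracialState φ →
          U.MonotoneConv F Δ δc φ h h ∧ U.MonotoneConv F Δ δc h φ h) := by
  have no_right_invariant : ¬ ∃ h : U.carrier →ₗ[ℂ] ℂ, IsState h ∧
      ∀ φ : U.carrier →ₗ[ℂ] ℂ, IsTracialState φ → U.MonotoneConv F Δ δc h φ h := by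
    rintro ⟨h, hh, hconv⟩
    have : Nontrivial (Fin n) := Fin.nontrivial_iff_two_le.mpr hn
    obtain ⟨i₀, i₁, hne⟩ := exists_pair_ne (Fin n)
    have hval (V : Matrix.unitaryGroup (Fin n) ℂ) :
        h (star (U.u i₀ i₀) * U.u i₀ i₀) = star (V i₀ i₀) * V i₀ i₀ :=
      U.apply_star_u_mul_u_of_monotoneConv_pauliState hΔ hδ hh.1
        (hconv _ (U.isTracialState_pauliState V)) _ _ _ _
    have h_swap := (hval 1).symm.trans (hval ⟨_, (Equiv.swap i₀ i₁).permMatrix_mem_unitaryGroup⟩)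
    simp [hne.symm] at h_swap
  refine ⟨no_right_invariant, fun ⟨h, hh, hconv⟩ => ?_, fun ⟨h, hh, hconv⟩ => ?_⟩
  · exact no_right_invariant ⟨h, hh, fun φ hφ => (hconv φ hφ.1).2⟩
  · exact no_right_invariant ⟨h, hh.1, fun φ hφ => (hconv φ hφ).2⟩
end
end

section
/- Let (A,φ) be a noncommutative probability space with free cumulants (κ_q). Let r ≥ 1 and let {1,…,r} = E ∪ F be a disjoint union, σ a non-crossing partition of E, and suppose K(σ) is a partition of F such that σ ∪ K(σ) is a non-crossing partition of {1,…,r} and every partition μ of F with σ ∪ μ non-crossing refines K(σ). Then for all a_1,…,a_r ∈ A: ∑_{μ ∈ NC(F), σ∪μ ∈ NC(r)} κ_μ(a_1,…,a_r) = φ_{K(σ)}(a_1,…,a_r), where for a partition π of a subset S ⊆ {1,…,r} one sets κ_π(a_1,…,a_r) = ∏_{blocks {i_1<…<i_k} of π} κ_k(a_{i_1},…,a_{i_k}) and φ_π(a_1,…,a_r) = ∏_{blocks {i_1<…<i_k} of π} φ(a_{i_1}⋯a_{i_k}). -/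
noncomputable section

open scoped Classical

/-- `P` is a partition of the subset `S` of `{0, …, q-1}`. -/
def IsPartitionOn (q : ℕ) (S : Finset (Fin q)) (P : Finset (Finset (Fin q))) : Prop :=
  (∀ B ∈ P, B.Nonempty ∧ B ⊆ S) ∧ ∀ i ∈ S, ∃! B, B ∈ P ∧ i ∈ B

/-- The collection of blocks `P` is non-crossing. -/
def IsNonCrossing (q : ℕ) (P : Finset (Finset (Fin q))) : Prop :=
  ¬ ∃ (B₁ B₂ : Finset (Fin q)) (i j k l : Fin q),
      B₁ ∈ P ∧ B₂ ∈ P ∧ B₁ ≠ B₂ ∧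
      i < j ∧ j < k ∧ k < l ∧ i ∈ B₁ ∧ k ∈ B₁ ∧ j ∈ B₂ ∧ l ∈ B₂

/-- The elements of the block `B`, listed in increasing order of their indices. -/
def blockList {A : Type} {q : ℕ} (a : Fin q → A) (B : Finset (Fin q)) : List A :=
  (B.sort (· ≤ ·)).map a

/-- `κ_P(a₁, …, a_q)`: the product over the blocks of `P` of the cumulants. -/
def cumPart {A : Type} (κ : List A → ℂ) {q : ℕ} (a : Fin q → A)
    (P : Finset (Finset (Fin q))) : ℂ :=
  ∏ B ∈ P, κ (blockList a B)

/-- `φ_P(a₁, …, a_q)`: the product over the blocks of `P` of the moments. -/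
def momPart {A : Type} [Ring A] [Algebra ℂ A] (φ : A →ₗ[ℂ] ℂ) {q : ℕ}
    (a : Fin q → A) (P : Finset (Finset (Fin q))) : ℂ :=
  ∏ B ∈ P, φ (blockList a B).prod

/-- `κ` is the family of free cumulants of `(A, φ)`, encoded as a function on lists:
`κ [a₁, …, a_q] = κ_q(a₁, …, a_q)`.  It is multilinear and satisfies the
moment-cumulant relations over non-crossing partitions. -/
def IsCumulantFamily {A : Type} [Ring A] [Algebra ℂ A] (φ : A →ₗ[ℂ] ℂ)
    (κ : List A → ℂ) : Prop :=
  (∀ (l₁ l₂ : List A) (c : ℂ) (x y : A),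
      κ (l₁ ++ (c • x + y) :: l₂) = c * κ (l₁ ++ x :: l₂) + κ (l₁ ++ y :: l₂)) ∧
  ∀ q : ℕ, 0 < q → ∀ a : Fin q → A,
    φ (List.ofFn a).prod =
      ∑ P ∈ Finset.univ.filter (fun P : Finset (Finset (Fin q)) =>
          IsPartitionOn q Finset.univ P ∧ IsNonCrossing q P),
        cumPart κ a P

/-!
By maximality of `K(σ)`, a partition `μ` of `F` with `σ ∪ μ` non-crossing refines `K(σ)`, and
then `σ ∪ μ` is non-crossing exactly when the restriction of `μ` to every block of `K(σ)` is:
a crossing either stays inside one block of `σ ∪ K(σ)` or is a crossing of two of its blocks.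
So the sum runs over independent choices of a non-crossing partition of each block `B` of
`K(σ)`, it factors as `∏_B ∑_{ν ∈ NC(B)} κ_ν`, and each factor is `φ(a_B)` by the
moment-cumulant formula transported to `B` along its increasing enumeration.
-/

open Finset

def Refines {q : ℕ} (μ K : Finset (Finset (Fin q))) : Prop :=
  ∀ B ∈ μ, ∃ B' ∈ K, B ⊆ B'

section Partitions

variable {q : ℕ} {S T : Finset (Fin q)} {P : Finset (Finset (Fin q))}

theorem IsPartitionOn.eq_of_mem (hP : IsPartitionOn q S P) {B B' : Finset (Fin q)}
    (hB : B ∈ P) (hB' : B' ∈ P) {i : Fin q} (hi : i ∈ B) (hi' : i ∈ B') : B = B' := by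
  obtain ⟨_, -, hu⟩ := hP.2 i ((hP.1 B hB).2 hi)
  exact (hu B ⟨hB, hi⟩).trans (hu B' ⟨hB', hi'⟩).symm

theorem IsPartitionOn.not_subset (hP : IsPartitionOn q S P) (hST : Disjoint S T)
    {C D : Finset (Fin q)} (hD : D ∈ P) (hC : C ⊆ T) : ¬ D ⊆ C := by
  intro hDC
  obtain ⟨i, hi⟩ := (hP.1 D hD).1
  exact disjoint_left.1 hST ((hP.1 D hD).2 hi) (hC (hDC hi))

theorem IsNonCrossing.mono {Q : Finset (Finset (Fin q))} (hQ : IsNonCrossing q Q) (h : P ⊆ Q) :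
    IsNonCrossing q P := by
  rintro ⟨B₁, B₂, i, j, k, l, h₁, h₂, rest⟩
  exact hQ ⟨B₁, B₂, i, j, k, l, h h₁, h h₂, rest⟩

theorem isNonCrossing_singleton (C : Finset (Fin q)) : IsNonCrossing q {C} := by
  rintro ⟨B₁, B₂, -, -, -, -, h₁, h₂, hne, -⟩
  exact hne ((mem_singleton.1 h₁).trans (mem_singleton.1 h₂).symm)

theorem IsNonCrossing.of_refines {ρ τ : Finset (Finset (Fin q))} (hρ : IsNonCrossing q ρ)
    (href : Refines τ ρ) (hloc : ∀ C ∈ ρ, IsNonCrossing q (τ.filter (· ⊆ C))) :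
    IsNonCrossing q τ := by
  rintro ⟨D₁, D₂, i, j, k, l, hD₁, hD₂, hne, hij, hjk, hkl, hi, hk, hj, hl⟩
  obtain ⟨C₁, hC₁, h₁⟩ := href D₁ hD₁
  obtain ⟨C₂, hC₂, h₂⟩ := href D₂ hD₂
  by_cases hC : C₁ = C₂
  · subst hC
    exact hloc C₁ hC₁ ⟨D₁, D₂, i, j, k, l, mem_filter.2 ⟨hD₁, h₁⟩, mem_filter.2 ⟨hD₂, h₂⟩,
      hne, hij, hjk, hkl, hi, hk, hj, hl⟩
  · exact hρ ⟨C₁, C₂, i, j, k, l, hC₁, hC₂, hC, hij, hjk, hkl, h₁ hi, h₁ hk, h₂ hj, h₂ hl⟩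

end Partitions

section Transport

variable {m r : ℕ} {f : Fin m → Fin r}

theorem isPartitionOn_image_iff (hf : Function.Injective f) {S : Finset (Fin m)}
    {P : Finset (Finset (Fin m))} :
    IsPartitionOn r (S.image f) (P.image (image f)) ↔ IsPartitionOn m S P := by
  constructor
  · rintro ⟨hblocks, hcover⟩
    refine ⟨fun C hC => ?_, fun i hi => ?_⟩
    · obtain ⟨hne, hsub⟩ := hblocks _ (mem_image_of_mem _ hC)
      exact ⟨image_nonempty.1 hne, (image_subset_image_iff hf).1 hsub⟩
    · obtain ⟨D, ⟨hD, hiD⟩, hu⟩ := hcover (f i) (mem_image_of_mem f hi)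
      obtain ⟨C, hC, rfl⟩ := mem_image.1 hD
      exact ⟨C, ⟨hC, hf.mem_finset_image.1 hiD⟩, fun C' ⟨hC', hiC'⟩ =>
        image_injective hf (hu _ ⟨mem_image_of_mem _ hC', mem_image_of_mem f hiC'⟩)⟩
  · rintro ⟨hblocks, hcover⟩
    refine ⟨forall_mem_image.2 fun C hC => ?_, fun j hj => ?_⟩
    · exact ⟨(hblocks C hC).1.image f, image_subset_image (hblocks C hC).2⟩
    · obtain ⟨i, hi, rfl⟩ := mem_image.1 hj
      obtain ⟨C, ⟨hC, hiC⟩, hu⟩ := hcover i hi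
      refine ⟨C.image f, ⟨mem_image_of_mem _ hC, mem_image_of_mem f hiC⟩, ?_⟩
      rintro D ⟨hD, hiD⟩
      obtain ⟨C', hC', rfl⟩ := mem_image.1 hD
      rw [hu C' ⟨hC', hf.mem_finset_image.1 hiD⟩]

theorem isNonCrossing_image_iff (hf : StrictMono f) {P : Finset (Finset (Fin m))} :
    IsNonCrossing r (P.image (image f)) ↔ IsNonCrossing m P := by
  refine not_congr ⟨?_, ?_⟩
  · rintro ⟨D₁, D₂, i, j, k, l, hD₁, hD₂, hne, hij, hjk, hkl, hi, hk, hj, hl⟩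
    obtain ⟨C₁, hC₁, rfl⟩ := mem_image.1 hD₁
    obtain ⟨C₂, hC₂, rfl⟩ := mem_image.1 hD₂
    obtain ⟨i₀, hi₀, rfl⟩ := mem_image.1 hi
    obtain ⟨k₀, hk₀, rfl⟩ := mem_image.1 hk
    obtain ⟨j₀, hj₀, rfl⟩ := mem_image.1 hj
    obtain ⟨l₀, hl₀, rfl⟩ := mem_image.1 hl
    exact ⟨C₁, C₂, i₀, j₀, k₀, l₀, hC₁, hC₂, fun h => hne (h ▸ rfl), hf.lt_iff_lt.1 hij,
      hf.lt_iff_lt.1 hjk, hf.lt_iff_lt.1 hkl, hi₀, hk₀, hj₀, hl₀⟩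
  · rintro ⟨C₁, C₂, i, j, k, l, hC₁, hC₂, hne, hij, hjk, hkl, hi, hk, hj, hl⟩
    exact ⟨C₁.image f, C₂.image f, f i, f j, f k, f l, mem_image_of_mem _ hC₁,
      mem_image_of_mem _ hC₂, fun h => hne (image_injective hf.injective h), hf hij, hf hjk,
      hf hkl, mem_image_of_mem f hi, mem_image_of_mem f hk, mem_image_of_mem f hj,
      mem_image_of_mem f hl⟩

theorem blockList_image {A : Type} (e : Fin m ↪o Fin r) (a : Fin r → A) (C : Finset (Fin m)) :
    blockList a (C.image e) = blockList (a ∘ e) C := by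
  have h := (e.strictMono.strictMonoOn C).map_finsetSort e.toEmbedding
  rw [map_eq_image] at h
  rw [blockList, blockList, ← List.map_map]
  exact congrArg _ h.symm

theorem cumPart_image {A : Type} (κ : List A → ℂ) (e : Fin m ↪o Fin r) (a : Fin r → A)
    (P : Finset (Finset (Fin m))) :
    cumPart κ a (P.image (image e)) = cumPart κ (a ∘ e) P := by
  rw [cumPart, cumPart, prod_image fun C _ C' _ h => image_injective e.injective h]
  simp only [blockList_image e]

theorem sum_cumPart_image {A : Type} (κ : List A → ℂ) (e : Fin m ↪o Fin r) (a : Fin r → A) :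
    ∑ ν ∈ univ.filter (fun ν => IsPartitionOn r (univ.image e) ν ∧ IsNonCrossing r ν),
        cumPart κ a ν =
      ∑ P ∈ univ.filter (fun P => IsPartitionOn m univ P ∧ IsNonCrossing m P),
        cumPart κ (a ∘ e) P := by
  have hpre : ∀ ν : Finset (Finset (Fin r)), IsPartitionOn r (univ.image e) ν →
      (ν.image fun D => univ.filter (e · ∈ D)).image (image e) = ν := by
    intro ν hν
    rw [image_image]
    refine (image_congr fun D hD => ?_).trans image_id
    ext j
    simp only [Function.comp_apply, mem_image, mem_filter, mem_univ, true_and, id]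
    refine ⟨fun ⟨i, hi, hij⟩ => hij ▸ hi, fun hj => ?_⟩
    obtain ⟨i, -, rfl⟩ := mem_image.1 ((hν.1 D hD).2 hj)
    exact ⟨i, hj, rfl⟩
  refine sum_nbij' (fun ν => ν.image fun D => univ.filter (e · ∈ D)) (fun P => P.image (image e))
    ?_ ?_ ?_ ?_ ?_
  · intro ν hν
    simp only [mem_filter, mem_univ, true_and] at hν ⊢
    rwa [← hpre ν hν.1, isPartitionOn_image_iff e.injective,
      isNonCrossing_image_iff e.strictMono] at hν
  · intro P hP
    simp only [mem_filter, mem_univ, true_and] at hP ⊢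
    rwa [isPartitionOn_image_iff e.injective, isNonCrossing_image_iff e.strictMono]
  · intro ν hν
    exact hpre ν (mem_filter.1 hν).2.1
  · intro P _
    rw [image_image]
    refine (image_congr fun C _ => ?_).trans image_id
    ext i
    simp [e.injective.eq_iff]
  · intro ν hν
    conv_lhs => rw [← hpre ν (mem_filter.1 hν).2.1]
    exact cumPart_image κ e a _

end Transport

theorem moment_blockList_eq_sum_cumPart {A : Type} [Ring A] [Algebra ℂ A] {φ : A →ₗ[ℂ] ℂ}
    {κ : List A → ℂ} (hκ : IsCumulantFamily φ κ) {r : ℕ} (a : Fin r → A)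
    {B : Finset (Fin r)} (hB : B.Nonempty) :
    φ (blockList a B).prod =
      ∑ ν ∈ univ.filter (fun ν => IsPartitionOn r B ν ∧ IsNonCrossing r ν), cumPart κ a ν := by
  obtain ⟨m, e, rfl⟩ : ∃ m, ∃ e : Fin m ↪o Fin r, univ.image e = B :=
    ⟨_, _, B.image_orderEmbOfFin_univ rfl⟩
  have hm : 0 < m := Fin.pos_iff_nonempty.2 (univ_nonempty_iff.1 hB.of_image)
  rw [sum_cumPart_image, blockList_image, blockList, Fin.sort_univ, ← List.ofFn_eq_map, hκ.2 m hm]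

section Refinement

variable {r : ℕ} {F : Finset (Fin r)} {K μ : Finset (Finset (Fin r))}

theorem IsPartitionOn.filter_subset_block (hμ : IsPartitionOn r F μ) (hK : IsPartitionOn r F K)
    (href : Refines μ K) {B : Finset (Fin r)} (hB : B ∈ K) :
    IsPartitionOn r B (μ.filter (· ⊆ B)) := by
  refine ⟨fun D hD => ⟨(hμ.1 D (mem_filter.1 hD).1).1, (mem_filter.1 hD).2⟩, fun i hi => ?_⟩
  obtain ⟨D, ⟨hD, hiD⟩, hu⟩ := hμ.2 i ((hK.1 B hB).2 hi)
  obtain ⟨B', hB', hDB'⟩ := href D hD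
  obtain rfl := hK.eq_of_mem hB hB' hi (hDB' hiD)
  exact ⟨D, ⟨mem_filter.2 ⟨hD, hDB'⟩, hiD⟩,
    fun D' ⟨hD', hiD'⟩ => hu D' ⟨(mem_filter.1 hD').1, hiD'⟩⟩

theorem biUnion_filter_subset (href : Refines μ K) :
    (univ : Finset K).biUnion (fun B => μ.filter (· ⊆ (B : Finset (Fin r)))) = μ := by
  ext D
  simp only [mem_biUnion, mem_univ, true_and, mem_filter, Subtype.exists]
  exact ⟨fun ⟨_, _, hD, _⟩ => hD, fun hD => by
    obtain ⟨B, hB, hDB⟩ := href D hD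
    exact ⟨B, hB, hD, hDB⟩⟩

theorem filter_subset_biUnion (hK : IsPartitionOn r F K) {g : K → Finset (Finset (Fin r))}
    (hg : ∀ B : K, IsPartitionOn r B (g B)) (B : K) :
    (univ.biUnion g).filter (· ⊆ (B : Finset (Fin r))) = g B := by
  ext D
  simp only [mem_filter, mem_biUnion, mem_univ, true_and]
  refine ⟨fun ⟨⟨B', hD⟩, hDB⟩ => ?_, fun hD => ⟨⟨B, hD⟩, ((hg B).1 D hD).2⟩⟩
  obtain ⟨i, hi⟩ := ((hg B').1 D hD).1
  obtain rfl : B' = B := Subtype.ext (hK.eq_of_mem B'.2 B.2 (((hg B').1 D hD).2 hi) (hDB hi))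
  exact hD

theorem isPartitionOn_biUnion (hK : IsPartitionOn r F K) {g : K → Finset (Finset (Fin r))}
    (hg : ∀ B : K, IsPartitionOn r B (g B)) : IsPartitionOn r F (univ.biUnion g) := by
  refine ⟨fun D hD => ?_, fun i hi => ?_⟩
  · obtain ⟨B, -, hD⟩ := mem_biUnion.1 hD
    exact ⟨((hg B).1 D hD).1, ((hg B).1 D hD).2.trans (hK.1 B B.2).2⟩
  obtain ⟨B, ⟨hB, hiB⟩, -⟩ := hK.2 i hi
  obtain ⟨D, ⟨hD, hiD⟩, hu⟩ := (hg ⟨B, hB⟩).2 i hiB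
  refine ⟨D, ⟨mem_biUnion.2 ⟨_, mem_univ _, hD⟩, hiD⟩, fun D' ⟨hD', hiD'⟩ => hu D' ⟨?_, hiD'⟩⟩
  obtain ⟨B', -, hD'B'⟩ := mem_biUnion.1 hD'
  obtain rfl : B' = ⟨B, hB⟩ :=
    Subtype.ext (hK.eq_of_mem B'.2 hB (((hg B').1 D' hD'B').2 hiD') hiB)
  exact hD'B'

theorem sum_prod_refines_eq_prod_sum {R : Type*} [CommSemiring R] (hK : IsPartitionOn r F K)
    (p : Finset (Finset (Fin r)) → Prop) (f : Finset (Fin r) → R) :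
    ∑ μ ∈ univ.filter (fun μ => IsPartitionOn r F μ ∧ Refines μ K ∧
        ∀ B ∈ K, p (μ.filter (· ⊆ B))), ∏ D ∈ μ, f D =
      ∏ B ∈ K, ∑ ν ∈ univ.filter (fun ν => IsPartitionOn r B ν ∧ p ν), ∏ D ∈ ν, f D := by
  rw [← prod_coe_sort, prod_univ_sum]
  refine sum_nbij' (fun μ (B : K) => μ.filter (· ⊆ (B : Finset (Fin r))))
    (fun g => univ.biUnion g) ?_ ?_ ?_ ?_ ?_
  · intro μ hμ
    obtain ⟨hμ, href, hp⟩ := (mem_filter.1 hμ).2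
    exact Fintype.mem_piFinset.2 fun B =>
      mem_filter.2 ⟨mem_univ _, hμ.filter_subset_block hK href B.2, hp B B.2⟩
  · intro g hg
    have hg' : ∀ B : K, IsPartitionOn r B (g B) ∧ p (g B) := fun B =>
      (mem_filter.1 (Fintype.mem_piFinset.1 hg B)).2
    refine mem_filter.2 ⟨mem_univ _, isPartitionOn_biUnion hK (fun B => (hg' B).1), ?_, ?_⟩
    · intro D hD
      obtain ⟨B, -, hD⟩ := mem_biUnion.1 hD
      exact ⟨B, B.2, (((hg' B).1).1 D hD).2⟩
    · intro B hB
      rw [filter_subset_biUnion hK (fun B => (hg' B).1) ⟨B, hB⟩]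
      exact (hg' _).2
  · intro μ hμ
    exact biUnion_filter_subset (mem_filter.1 hμ).2.2.1
  · intro g hg
    funext B
    exact filter_subset_biUnion hK (fun B => (mem_filter.1 (Fintype.mem_piFinset.1 hg B)).2.1) B
  · intro μ hμ
    obtain ⟨hμ, href, -⟩ := (mem_filter.1 hμ).2
    conv_lhs => rw [← biUnion_filter_subset href]
    refine prod_biUnion fun B _ B' _ hne => disjoint_left.2 fun D hD hD' => hne ?_
    obtain ⟨hD, hDB⟩ := mem_filter.1 hD
    obtain ⟨i, hi⟩ := (hμ.1 D hD).1
    exact Subtype.ext (hK.eq_of_mem B.2 B'.2 (hDB hi) ((mem_filter.1 hD').2 hi))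

end Refinement

theorem isNonCrossing_union_iff {r : ℕ} {E F : Finset (Fin r)} (hEF : Disjoint E F)
    {σ K μ : Finset (Finset (Fin r))} (hσ : IsPartitionOn r E σ) (hK : IsPartitionOn r F K)
    (hKnc : IsNonCrossing r (σ ∪ K)) (hμ : IsPartitionOn r F μ) (href : Refines μ K) :
    IsNonCrossing r (σ ∪ μ) ↔ ∀ B ∈ K, IsNonCrossing r (μ.filter (· ⊆ B)) := by
  refine ⟨fun h B _ => h.mono (filter_subset _ _ |>.trans subset_union_right), fun hloc => ?_⟩
  refine hKnc.of_refines ?_ fun C hC => ?_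
  · intro D hD
    rcases mem_union.1 hD with hD | hD
    · exact ⟨D, mem_union_left _ hD, subset_rfl⟩
    · obtain ⟨B, hB, hDB⟩ := href D hD
      exact ⟨B, mem_union_right _ hB, hDB⟩
  rcases mem_union.1 hC with hC | hC
  · refine (isNonCrossing_singleton C).mono fun D hD => ?_
    obtain ⟨hD, hDC⟩ := mem_filter.1 hD
    rcases mem_union.1 hD with hD | hD
    · obtain ⟨i, hi⟩ := (hσ.1 D hD).1
      exact mem_singleton.2 (hσ.eq_of_mem hD hC hi (hDC hi))
    · exact absurd hDC (hμ.not_subset hEF.symm hD (hσ.1 C hC).2)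
  · refine (hloc C hC).mono fun D hD => ?_
    obtain ⟨hD, hDC⟩ := mem_filter.1 hD
    rcases mem_union.1 hD with hD | hD
    · exact absurd hDC (hσ.not_subset hEF hD (hK.1 C hC).2)
    · exact mem_filter.2 ⟨hD, hDC⟩

theorem cumulant_sum_over_compatible_partitions_general
    (A : Type) [Ring A] [Algebra ℂ A]
    (φ : A →ₗ[ℂ] ℂ)
    (κ : List A → ℂ) (hκ : IsCumulantFamily φ κ)
    (r : ℕ) (E F : Finset (Fin r))
    (hdisj : Disjoint E F)
    (σ : Finset (Finset (Fin r))) (hσ : IsPartitionOn r E σ)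
    (K : Finset (Finset (Fin r))) (hK : IsPartitionOn r F K)
    (hKnc : IsNonCrossing r (σ ∪ K))
    (hKmax : ∀ μ : Finset (Finset (Fin r)), IsPartitionOn r F μ →
        IsNonCrossing r (σ ∪ μ) → ∀ B ∈ μ, ∃ B' ∈ K, B ⊆ B')
    (a : Fin r → A) :
    (∑ μ ∈ Finset.univ.filter (fun μ : Finset (Finset (Fin r)) =>
        IsPartitionOn r F μ ∧ IsNonCrossing r (σ ∪ μ)), cumPart κ a μ) =
      momPart φ a K := by
  have hcompatible : ∀ μ, IsPartitionOn r F μ ∧ IsNonCrossing r (σ ∪ μ) ↔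
      IsPartitionOn r F μ ∧ Refines μ K ∧ ∀ B ∈ K, IsNonCrossing r (μ.filter (· ⊆ B)) := by
    refine fun μ => and_congr_right fun hμ => ⟨fun h => ?_, fun ⟨href, hloc⟩ => ?_⟩
    · exact ⟨hKmax μ hμ h, (isNonCrossing_union_iff hdisj hσ hK hKnc hμ (hKmax μ hμ h)).1 h⟩
    · exact (isNonCrossing_union_iff hdisj hσ hK hKnc hμ href).2 hloc
  rw [filter_congr fun μ _ => hcompatible μ, momPart,
    prod_congr rfl fun B hB => moment_blockList_eq_sum_cumPart hκ a (hK.1 B hB).1]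
  exact sum_prod_refines_eq_prod_sum hK _ _

/-- If `σ` is a non-crossing partition of `E ⊆ {1,…,r}` and `K(σ)`
is the largest partition of the complement `F` with `σ ∪ K(σ)` non-crossing, then the
sum of `κ_μ` over all partitions `μ` of `F` with `σ ∪ μ` non-crossing equals
`φ_{K(σ)}`. -/
theorem cumulant_sum_over_compatible_partitions
    (A : Type) [Ring A] [Algebra ℂ A] [StarRing A] [StarModule ℂ A]
    (φ : A →ₗ[ℂ] ℂ) (hφ : IsState φ)
    (κ : List A → ℂ) (hκ : IsCumulantFamily φ κ)
    (r : ℕ) (hr : 0 < r) (E F : Finset (Fin r))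
    (hdisj : Disjoint E F) (hcover : E ∪ F = Finset.univ)
    (σ : Finset (Finset (Fin r))) (hσ : IsPartitionOn r E σ) (hσnc : IsNonCrossing r σ)
    (K : Finset (Finset (Fin r))) (hK : IsPartitionOn r F K)
    (hKnc : IsNonCrossing r (σ ∪ K))
    (hKmax : ∀ μ : Finset (Finset (Fin r)), IsPartitionOn r F μ →
        IsNonCrossing r (σ ∪ μ) → ∀ B ∈ μ, ∃ B' ∈ K, B ⊆ B')
    (a : Fin r → A) :
    (∑ μ ∈ Finset.univ.filter (fun μ : Finset (Finset (Fin r)) =>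
        IsPartitionOn r F μ ∧ IsNonCrossing r (σ ∪ μ)), cumPart κ a μ) =
      momPart φ a K :=
  cumulant_sum_over_compatible_partitions_general A φ κ hκ r E F hdisj σ hσ K hK hKnc hKmax a
end
end
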